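/- arXiv:1807.06262 — 8 statements merged into one kernel-verified Lean document; each statement's English description precedes it below -/
import Mathlib

section
/- Let λ : ℝ → ℝ be a continuous T-periodic function with λ_m = sup_τ |λ(τ)| > 0 and let μ > 0 satisfy 2·μ^{3/2} > λ_m. Then in the rectangle D = { (α, u) : 0 ≤ α ≤ (λ_m/μ)², |u| ≤ λ_m/μ } the system α' = u² − α, u' = −αu − λ(τ) − μu has exactly one T-periodic solution, and every solution starting in D converges to this periodic solution exponentially fast as τ → +∞. -/
open Filter

section AuxForUniquePeriodic
open Set


/-- Barrier lemma: if `g a ≤ c` and `g' ≤ 0` whenever `g > c` (in the interior),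
then `g ≤ c` on `[a,b]`. -/
lemma barrier {a b c : ℝ} {g g' : ℝ → ℝ} (hab : a ≤ b)
    (hd : ∀ τ ∈ Icc a b, HasDerivWithinAt g (g' τ) (Icc a b) τ)
    (h0 : g a ≤ c) (hneg : ∀ τ ∈ Ioo a b, c < g τ → g' τ ≤ 0) :
    ∀ τ ∈ Icc a b, g τ ≤ c := by
  intro t ht
  by_contra hgt
  push_neg at hgt
  have hcont : ContinuousOn g (Icc a b) := fun τ hτ => (hd τ hτ).continuousWithinAt
  have hta : a < t := by
    rcases lt_or_eq_of_le ht.1 with h | h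
    · exact h
    · exact absurd h0 (by rw [h]; exact not_le.2 hgt)
  set S : Set ℝ := {s | s ∈ Icc a t ∧ g s ≤ c} with hS
  have hSne : S.Nonempty := ⟨a, ⟨le_refl a, hta.le⟩, h0⟩
  have hSbdd : BddAbove S := ⟨t, fun s hs => hs.1.2⟩
  have hIccab : Icc a t ⊆ Icc a b := Icc_subset_Icc le_rfl ht.2
  have hScl : IsClosed S := by
    have : S = Icc a t ∩ g ⁻¹' (Iic c) := by ext s; simp [hS, and_comm]
    rw [this]
    exact (hcont.mono hIccab).preimage_isClosed_of_isClosed isClosed_Icc isClosed_Iic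
  set s₀ := sSup S with hs₀
  have hs₀S : s₀ ∈ S := hScl.csSup_mem hSne hSbdd
  have hs₀t : s₀ < t := lt_of_le_of_ne hs₀S.1.2 (fun h => (not_le.2 hgt) (h ▸ hs₀S.2))
  have hgt' : ∀ σ ∈ Ioc s₀ t, c < g σ := by
    intro σ hσ
    by_contra hle
    push_neg at hle
    have : σ ∈ S := ⟨⟨hs₀S.1.1.trans hσ.1.le, hσ.2⟩, hle⟩
    exact absurd (le_csSup hSbdd this) (not_le.2 hσ.1)
  -- g is antitone on [s₀, t]
  have hanti : AntitoneOn g (Icc s₀ t) := by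
    apply antitoneOn_of_deriv_nonpos (convex_Icc s₀ t)
        (hcont.mono (Icc_subset_Icc hs₀S.1.1 ht.2))
    · intro x hx
      rw [interior_Icc] at hx
      have hxab : x ∈ Ioo a b := ⟨lt_of_le_of_lt hs₀S.1.1 hx.1, lt_of_lt_of_le hx.2 ht.2⟩
      exact ((hd x (Ioo_subset_Icc_self hxab)).hasDerivAt
        (Icc_mem_nhds hxab.1 hxab.2)).differentiableAt.differentiableWithinAt
    · intro x hx
      rw [interior_Icc] at hx
      have hxab : x ∈ Ioo a b := ⟨lt_of_le_of_lt hs₀S.1.1 hx.1, lt_of_lt_of_le hx.2 ht.2⟩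
      have := (hd x (Ioo_subset_Icc_self hxab)).hasDerivAt (Icc_mem_nhds hxab.1 hxab.2)
      rw [this.deriv]
      exact hneg x hxab (hgt' x ⟨hx.1, hx.2.le⟩)
  have := hanti (left_mem_Icc.2 hs₀t.le) (right_mem_Icc.2 hs₀t.le) hs₀t.le
  exact absurd (this.trans hs₀S.2) (not_le.2 hgt)

section helpers
lemma hdw_fst {x : ℝ → ℝ × ℝ} {d : ℝ × ℝ} {s : Set ℝ} {τ : ℝ}
    (hx : HasDerivWithinAt x d s τ) : HasDerivWithinAt (fun σ => (x σ).1) d.1 s τ := by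
  simpa [Function.comp_def] using (ContinuousLinearMap.hasFDerivAt
    (ContinuousLinearMap.fst ℝ ℝ ℝ) (x := x τ)).comp_hasDerivWithinAt τ hx

lemma hdw_snd {x : ℝ → ℝ × ℝ} {d : ℝ × ℝ} {s : Set ℝ} {τ : ℝ}
    (hx : HasDerivWithinAt x d s τ) : HasDerivWithinAt (fun σ => (x σ).2) d.2 s τ := by
  simpa [Function.comp_def] using (ContinuousLinearMap.hasFDerivAt
    (ContinuousLinearMap.snd ℝ ℝ ℝ) (x := x τ)).comp_hasDerivWithinAt τ hx

lemma hda_fst {x : ℝ → ℝ × ℝ} {d : ℝ × ℝ} {τ : ℝ}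
    (hx : HasDerivAt x d τ) : HasDerivAt (fun σ => (x σ).1) d.1 τ := by
  simpa [Function.comp_def] using (ContinuousLinearMap.hasFDerivAt
    (ContinuousLinearMap.fst ℝ ℝ ℝ) (x := x τ)).comp_hasDerivAt τ hx

lemma hda_snd {x : ℝ → ℝ × ℝ} {d : ℝ × ℝ} {τ : ℝ}
    (hx : HasDerivAt x d τ) : HasDerivAt (fun σ => (x σ).2) d.2 τ := by
  simpa [Function.comp_def] using (ContinuousLinearMap.hasFDerivAt
    (ContinuousLinearMap.snd ℝ ℝ ℝ) (x := x τ)).comp_hasDerivAt τ hx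
end helpers
lemma quadkey (μ lm h P U a1 v1 : ℝ) (hμ : 0 < μ) (hlm : 0 < lm)
    (hcond : lm < 2 * μ ^ ((3:ℝ)/2))
    (hh : h = (1 - lm / (2 * μ ^ ((3:ℝ)/2))) * min 1 μ)
    (hP : 0 ≤ P) (hU : |U| ≤ lm / μ) :
    h * (a1^2 + v1^2) ≤ a1^2 - U*a1*v1 + (P+μ)*v1^2 := by
  set s := Real.sqrt μ with hs
  have hs0 : 0 < s := Real.sqrt_pos.2 hμ
  have hs2 : s^2 = μ := Real.sq_sqrt hμ.le
  have h32 : μ ^ ((3:ℝ)/2) = μ * s := by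
    have : ((3:ℝ)/2) = 1 + 1/2 := by norm_num
    rw [this, Real.rpow_add hμ, Real.rpow_one, ← Real.sqrt_eq_rpow]
  set θ := lm / (2 * μ * s) with hθ
  have hθ0 : 0 < θ := by positivity
  have hθ1 : θ < 1 := by
    rw [hθ, div_lt_one (by positivity)]
    calc lm < 2 * μ ^ ((3:ℝ)/2) := hcond
    _ = 2 * μ * s := by rw [h32]; ring
  have hh' : h = (1 - θ) * min 1 μ := by
    rw [hh, h32, hθ]; ring_nf
  set m := min 1 μ with hm
  have hm1 : m ≤ 1 := min_le_left _ _
  have hmμ : m ≤ μ := min_le_right _ _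
  have hAM : 2*s*(|a1| * |v1|) ≤ a1^2 + μ*v1^2 := by
    nlinarith [sq_nonneg (|a1| - s * |v1|), sq_abs a1, sq_abs v1]
  have h2θs : 2*θ*s = lm/μ := by
    rw [hθ]; field_simp
  have habs : U*a1*v1 ≤ 2*θ*s*(|a1| * |v1|) := by
    rw [h2θs]
    calc U*a1*v1 ≤ |U * a1 * v1| := le_abs_self _
    _ = |U| * (|a1| * |v1|) := by rw [abs_mul, abs_mul]; ring
    _ ≤ (lm/μ)*(|a1| * |v1|) := mul_le_mul_of_nonneg_right hU (by positivity)
  have e1 : θ*(2*s*(|a1| * |v1|)) ≤ θ*(a1^2+μ*v1^2) :=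
    mul_le_mul_of_nonneg_left hAM hθ0.le
  have e2 : m*(a1^2+v1^2) ≤ a1^2 + μ*v1^2 := by
    nlinarith [mul_le_mul_of_nonneg_right hm1 (sq_nonneg a1),
      mul_le_mul_of_nonneg_right hmμ (sq_nonneg v1)]
  have e3 : (1-θ)*(m*(a1^2+v1^2)) ≤ (1-θ)*(a1^2+μ*v1^2) :=
    mul_le_mul_of_nonneg_left e2 (by linarith)
  have hPv : 0 ≤ P * v1^2 := mul_nonneg hP (sq_nonneg _)
  rw [hh']
  nlinarith [e1, e3, habs, hPv]

/-- Lyapunov decay: if `(αp,up)` is a `D`-valued solution and `(α,u)` any solution on `[a,b]`,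
the squared distance decays exponentially. -/
lemma decay (μ lm h a b : ℝ) (l αp up α u : ℝ → ℝ)
    (hμ : 0 < μ) (hlm : 0 < lm) (hcond : lm < 2 * μ ^ ((3:ℝ)/2))
    (hh : h = (1 - lm / (2 * μ ^ ((3:ℝ)/2))) * min 1 μ)
    (hαp : ∀ τ ∈ Icc a b, HasDerivWithinAt αp (up τ^2 - αp τ) (Icc a b) τ)
    (hup : ∀ τ ∈ Icc a b, HasDerivWithinAt up (-(αp τ * up τ) - l τ - μ * up τ) (Icc a b) τ)
    (hα : ∀ τ ∈ Icc a b, HasDerivWithinAt α (u τ^2 - α τ) (Icc a b) τ)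
    (hu : ∀ τ ∈ Icc a b, HasDerivWithinAt u (-(α τ * u τ) - l τ - μ * u τ) (Icc a b) τ)
    (hD : ∀ τ ∈ Icc a b, 0 ≤ αp τ ∧ |up τ| ≤ lm / μ) :
    ∀ τ ∈ Icc a b, (α τ - αp τ)^2 + (u τ - up τ)^2 ≤
      ((α a - αp a)^2 + (u a - up a)^2) * Real.exp (-(2*h)*(τ-a)) := by
  intro t ht
  have hab : a ≤ b := le_trans ht.1 ht.2
  set W : ℝ → ℝ := fun τ => ((α τ - αp τ)^2 + (u τ - up τ)^2) * Real.exp ((2*h)*(τ-a)) with hW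
  have hWanti : AntitoneOn W (Icc a b) := by
    apply antitoneOn_of_deriv_nonpos (convex_Icc a b)
    · -- continuity
      have c1 : ContinuousOn α (Icc a b) := fun τ hτ => (hα τ hτ).continuousWithinAt
      have c2 : ContinuousOn αp (Icc a b) := fun τ hτ => (hαp τ hτ).continuousWithinAt
      have c3 : ContinuousOn u (Icc a b) := fun τ hτ => (hu τ hτ).continuousWithinAt
      have c4 : ContinuousOn up (Icc a b) := fun τ hτ => (hup τ hτ).continuousWithinAt
      exact (((c1.sub c2).pow 2).add ((c3.sub c4).pow 2)).mul
        ((Real.continuous_exp.comp (by fun_prop)).continuousOn)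
    all_goals {
      intro x hx
      rw [interior_Icc] at hx
      have hx' : x ∈ Icc a b := Ioo_subset_Icc_self hx
      have hmem : Icc a b ∈ nhds x := Icc_mem_nhds hx.1 hx.2
      have dα := (hα x hx').hasDerivAt hmem
      have dαp := (hαp x hx').hasDerivAt hmem
      have du := (hu x hx').hasDerivAt hmem
      have dup := (hup x hx').hasDerivAt hmem
      have dE : HasDerivAt (fun τ => Real.exp ((2*h)*(τ-a)))
          (Real.exp ((2*h)*(x-a)) * (2*h)) x := by
        have hid : HasDerivAt (fun τ : ℝ => (2*h)*(τ-a)) (2*h) x := by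
          simpa using ((hasDerivAt_id x).sub_const a).const_mul (2*h)
        exact hid.exp
      have dV : HasDerivAt (fun τ => (α τ - αp τ)^2 + (u τ - up τ)^2)
          (2 * (α x - αp x) * ((u x^2 - α x) - (up x^2 - αp x)) +
           2 * (u x - up x) * ((-(α x * u x) - l x - μ * u x) - (-(αp x * up x) - l x - μ * up x)))
          x := by
        have d1 := ((dα.sub dαp).pow 2)
        have d2 := ((du.sub dup).pow 2)
        exact (d1.add d2).congr_deriv (by norm_num)
      have dW : HasDerivAt W _ x := dV.mul dE
      first
      | exact dW.differentiableAt.differentiableWithinAt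
      | ( rw [dW.deriv]
          have hkey := quadkey μ lm h (αp x) (up x) (α x - αp x) (u x - up x)
            hμ hlm hcond hh (hD x hx').1 (hD x hx').2
          have hE : 0 < Real.exp ((2*h)*(x-a)) := Real.exp_pos _
          nlinarith [hE, hkey, mul_le_mul_of_nonneg_right
            (by nlinarith [hkey] :
              (2 * (α x - αp x) * ((u x^2 - α x) - (up x^2 - αp x)) +
               2 * (u x - up x) * ((-(α x * u x) - l x - μ * u x) - (-(αp x * up x) - l x - μ * up x)))
              + ((α x - αp x)^2 + (u x - up x)^2) * (2*h) ≤ 0) hE.le] )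
    }
  have := hWanti (left_mem_Icc.2 hab) ht ht.1
  have hWa : W a = (α a - αp a)^2 + (u a - up a)^2 := by simp [hW]
  rw [hWa] at this
  have hEt : Real.exp ((2*h)*(t-a)) * Real.exp (-(2*h)*(t-a)) = 1 := by
    rw [← Real.exp_add]; ring_nf; exact Real.exp_zero
  have hE0 : 0 < Real.exp (-(2*h)*(t-a)) := Real.exp_pos _
  calc (α t - αp t)^2 + (u t - up t)^2
      = W t * Real.exp (-(2*h)*(t-a)) := by
        rw [hW]; simp only; rw [mul_assoc, hEt, mul_one]
    _ ≤ ((α a - αp a)^2 + (u a - up a)^2) * Real.exp (-(2*h)*(t-a)) :=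
        mul_le_mul_of_nonneg_right this hE0.le
noncomputable def clampI (lo hi x : ℝ) : ℝ := min (max x lo) hi

lemma clampI_lip (lo hi x y : ℝ) : |clampI lo hi x - clampI lo hi y| ≤ |x - y| := by
  unfold clampI
  calc |min (max x lo) hi - min (max y lo) hi|
      ≤ max |max x lo - max y lo| |hi - hi| := abs_min_sub_min_le_max _ _ _ _
    _ ≤ |x - y| := by
        rw [sub_self, abs_zero]
        exact max_le (abs_max_sub_max_le_abs _ _ _) (abs_nonneg _)

lemma clampI_mem (lo hi x : ℝ) (h : lo ≤ hi) : lo ≤ clampI lo hi x ∧ clampI lo hi x ≤ hi :=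
  ⟨le_min (le_max_right _ _) h, min_le_right _ _⟩

lemma clampI_eq_self (lo hi x : ℝ) (h1 : lo ≤ x) (h2 : x ≤ hi) : clampI lo hi x = x := by
  unfold clampI; rw [max_eq_left h1, min_eq_left h2]

lemma clampI_eq_hi (lo hi x : ℝ) (h : hi ≤ x) (h' : lo ≤ hi) : clampI lo hi x = hi := by
  unfold clampI
  rw [min_eq_right (le_max_of_le_left h)]

lemma clampI_eq_lo (lo hi x : ℝ) (h : x ≤ lo) (h' : lo ≤ hi) : clampI lo hi x = lo := by
  unfold clampI
  rw [max_eq_right h, min_eq_left h']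

set_option maxHeartbeats 1000000 in
lemma exists_sol (μ lm b : ℝ) (l : ℝ → ℝ) (hμ : 0 < μ) (hlm : 0 < lm)
    (hl : Continuous l) (hlb : ∀ τ, |l τ| ≤ lm) (hb : 0 < b) (x₀ : ℝ × ℝ)
    (hx₀ : 0 ≤ x₀.1 ∧ x₀.1 ≤ (lm/μ)^2 ∧ |x₀.2| ≤ lm/μ) :
    ∃ x : ℝ → ℝ × ℝ, x 0 = x₀ ∧
      (∀ τ ∈ Icc 0 b, HasDerivWithinAt x
        ((x τ).2^2 - (x τ).1, -((x τ).1*(x τ).2) - l τ - μ*(x τ).2) (Icc 0 b) τ) ∧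
      (∀ τ ∈ Icc 0 b, 0 ≤ (x τ).1 ∧ (x τ).1 ≤ (lm/μ)^2 ∧ |(x τ).2| ≤ lm/μ) := by
  set r : ℝ := lm/μ with hrdef
  have hr : 0 < r := by positivity
  have hμr : μ * r = lm := by rw [hrdef]; field_simp
  set ca : ℝ → ℝ := clampI 0 (r^2) with hca
  set cu : ℝ → ℝ := clampI (-r) r with hcu
  have hr2 : (0:ℝ) ≤ r^2 := sq_nonneg r
  have hrr : -r ≤ r := by linarith
  set F : ℝ → ℝ × ℝ → ℝ × ℝ := fun τ p =>
    (cu p.2 ^ 2 - ca p.1, -(ca p.1 * cu p.2) - l τ - μ * cu p.2) with hF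
  -- bounds on clamps
  have hcab : ∀ x : ℝ, 0 ≤ ca x ∧ ca x ≤ r^2 := fun x => clampI_mem 0 (r^2) x hr2
  have hcub : ∀ x : ℝ, |cu x| ≤ r := fun x => abs_le.2 (clampI_mem (-r) r x hrr)
  -- constants
  set Lc : ℝ := 2*r + 1 + (r^2 + r + μ) with hLc
  have hLc0 : 0 ≤ Lc := by positivity
  set C : ℝ := 2*r^2 + (r^3 + lm + μ*r) with hC
  have hC0 : 0 < C := by positivity
  set R : ℝ := C * b + 1 with hR
  have hpl : IsPicardLindelof F (tmin := 0) (tmax := b) ⟨0, ⟨le_refl 0, hb.le⟩⟩ x₀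
      ⟨R, by positivity⟩ 0 ⟨C, hC0.le⟩ ⟨Lc, hLc0⟩ := by
    constructor
    · intro t ht
      apply LipschitzWith.lipschitzOnWith
      apply LipschitzWith.of_dist_le_mul
      intro p q
      have hd1 : dist p.1 q.1 ≤ dist p q := le_max_left _ _
      have hd2 : dist p.2 q.2 ≤ dist p q := le_max_right _ _
      rw [Real.dist_eq] at hd1 hd2
      have hc1 : |ca p.1 - ca q.1| ≤ dist p q := (clampI_lip _ _ _ _).trans hd1
      have hc2 : |cu p.2 - cu q.2| ≤ dist p q := (clampI_lip _ _ _ _).trans hd2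
      have hd0 : (0:ℝ) ≤ dist p q := dist_nonneg
      rw [Prod.dist_eq]
      apply max_le
      · rw [Real.dist_eq]
        have : (F t p).1 - (F t q).1 =
            (cu p.2 - cu q.2) * (cu p.2 + cu q.2) - (ca p.1 - ca q.1) := by
          simp only [hF]; ring
        rw [this]
        calc |(cu p.2 - cu q.2) * (cu p.2 + cu q.2) - (ca p.1 - ca q.1)|
            ≤ |(cu p.2 - cu q.2) * (cu p.2 + cu q.2)| + |ca p.1 - ca q.1| := abs_sub _ _
          _ = |cu p.2 - cu q.2| * |cu p.2 + cu q.2| + |ca p.1 - ca q.1| := by rw [abs_mul]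
          _ ≤ dist p q * (2*r) + dist p q := by
              have h3 : |cu p.2 + cu q.2| ≤ 2*r := by
                calc |cu p.2 + cu q.2| ≤ |cu p.2| + |cu q.2| := abs_add_le _ _
                  _ ≤ 2*r := by linarith [hcub p.2, hcub q.2]
              exact add_le_add (mul_le_mul hc2 h3 (abs_nonneg _) hd0) hc1
          _ ≤ Lc * dist p q := by rw [hLc]; nlinarith
      · rw [Real.dist_eq]
        have : (F t p).2 - (F t q).2 =
            -(ca p.1 * (cu p.2 - cu q.2)) - cu q.2 * (ca p.1 - ca q.1)
              - μ * (cu p.2 - cu q.2) := by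
          simp only [hF]; ring
        rw [this]
        have hca1 : |ca p.1| ≤ r^2 := by
          rw [abs_le]; exact ⟨by linarith [(hcab p.1).1], (hcab p.1).2⟩
        calc |-(ca p.1 * (cu p.2 - cu q.2)) - cu q.2 * (ca p.1 - ca q.1) - μ * (cu p.2 - cu q.2)|
            ≤ |-(ca p.1 * (cu p.2 - cu q.2)) - cu q.2 * (ca p.1 - ca q.1)|
              + |μ * (cu p.2 - cu q.2)| := abs_sub _ _
          _ ≤ |ca p.1 * (cu p.2 - cu q.2)| + |cu q.2 * (ca p.1 - ca q.1)|
              + |μ * (cu p.2 - cu q.2)| := by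
              have := abs_sub (-(ca p.1 * (cu p.2 - cu q.2))) (cu q.2 * (ca p.1 - ca q.1))
              rw [abs_neg] at this
              linarith
          _ ≤ r^2 * dist p q + r * dist p q + μ * dist p q := by
              rw [abs_mul, abs_mul, abs_mul]
              have e1 : |ca p.1| * |cu p.2 - cu q.2| ≤ r^2 * dist p q :=
                mul_le_mul hca1 hc2 (abs_nonneg _) hr2
              have e2 : |cu q.2| * |ca p.1 - ca q.1| ≤ r * dist p q :=
                mul_le_mul (hcub q.2) hc1 (abs_nonneg _) hr.le
              have e3 : |μ| * |cu p.2 - cu q.2| ≤ μ * dist p q := by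
                rw [abs_of_pos hμ]
                exact mul_le_mul_of_nonneg_left hc2 hμ.le
              linarith
          _ ≤ Lc * dist p q := by rw [hLc]; nlinarith
    · intro x _
      apply Continuous.continuousOn
      apply Continuous.prodMk
      · exact continuous_const
      · exact (continuous_const.sub hl).sub continuous_const
    · intro t _ x _
      rw [Prod.norm_def]
      apply max_le
      · rw [Real.norm_eq_abs]
        simp only [hF]
        have h1 : |cu x.2 ^ 2| ≤ r^2 := by
          rw [abs_pow]
          nlinarith [hcub x.2, abs_nonneg (cu x.2)]
        have h2 : |ca x.1| ≤ r^2 := by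
          rw [abs_le]; exact ⟨by linarith [(hcab x.1).1], (hcab x.1).2⟩
        calc |cu x.2 ^ 2 - ca x.1| ≤ |cu x.2 ^ 2| + |ca x.1| := abs_sub _ _
          _ ≤ C := by rw [hC]; nlinarith
      · rw [Real.norm_eq_abs]
        simp only [hF]
        have h2 : |ca x.1| ≤ r^2 := by
          rw [abs_le]; exact ⟨by linarith [(hcab x.1).1], (hcab x.1).2⟩
        have h3 : |ca x.1 * cu x.2| ≤ r^2 * r := by
          rw [abs_mul]; exact mul_le_mul h2 (hcub x.2) (abs_nonneg _) hr2
        have h4 : |μ * cu x.2| ≤ μ * r := by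
          rw [abs_mul, abs_of_pos hμ]
          exact mul_le_mul_of_nonneg_left (hcub x.2) hμ.le
        calc |-(ca x.1 * cu x.2) - l t - μ * cu x.2|
            ≤ |(-(ca x.1 * cu x.2) - l t)| + |μ * cu x.2| := abs_sub _ _
          _ ≤ |ca x.1 * cu x.2| + |l t| + |μ * cu x.2| := by
              have := abs_sub (-(ca x.1 * cu x.2)) (l t)
              rw [abs_neg] at this; linarith
          _ ≤ C := by rw [hC]; nlinarith [hlb t]
    · show C * max (b - 0) (0 - 0) ≤ R - 0
      rw [hR]
      have : max (b - 0) (0 - 0) = b := by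
        rw [max_eq_left] <;> linarith
      rw [this]
      linarith
  obtain ⟨x, hx0, hxd⟩ := hpl.exists_eq_forall_mem_Icc_hasDerivWithinAt₀
  change x 0 = x₀ at hx0
  -- component derivatives
  have hxd1 : ∀ τ ∈ Icc 0 b, HasDerivWithinAt (fun σ => (x σ).1)
      ((F τ (x τ)).1) (Icc 0 b) τ := by
    intro τ hτ
    have := (ContinuousLinearMap.hasFDerivAt (ContinuousLinearMap.fst ℝ ℝ ℝ)
      (x := x τ)).comp_hasDerivWithinAt τ (hxd τ hτ)
    simpa [Function.comp_def] using this
  have hxd2 : ∀ τ ∈ Icc 0 b, HasDerivWithinAt (fun σ => (x σ).2)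
      ((F τ (x τ)).2) (Icc 0 b) τ := by
    intro τ hτ
    have := (ContinuousLinearMap.hasFDerivAt (ContinuousLinearMap.snd ℝ ℝ ℝ)
      (x := x τ)).comp_hasDerivWithinAt τ (hxd τ hτ)
    simpa [Function.comp_def] using this
  -- invariance via barrier
  have inv1 : ∀ τ ∈ Icc 0 b, (x τ).1 ≤ r^2 := by
    apply barrier hb.le hxd1 (by rw [hx0]; exact hx₀.2.1)
    intro τ hτ hgt
    have hcaeq : ca (x τ).1 = r^2 := clampI_eq_hi _ _ _ hgt.le hr2
    simp only [hF, hcaeq]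
    nlinarith [hcub (x τ).2, abs_nonneg (cu (x τ).2), sq_abs (cu (x τ).2)]
  have inv2 : ∀ τ ∈ Icc 0 b, 0 ≤ (x τ).1 := by
    have := barrier (g := fun τ => -(x τ).1) (g' := fun τ => -((F τ (x τ)).1)) (c := 0) hb.le
      (fun τ hτ => (hxd1 τ hτ).neg) (by show -(x 0).1 ≤ 0; rw [hx0]; linarith [hx₀.1])
      (by
        intro τ hτ hgt
        have hgt' : (0:ℝ) < -(x τ).1 := hgt
        have hx1 : (x τ).1 ≤ 0 := by linarith
        have hcaeq : ca (x τ).1 = 0 := clampI_eq_lo _ _ _ hx1 hr2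
        simp only [hF, hcaeq]
        nlinarith [sq_nonneg (cu (x τ).2)])
    intro τ hτ
    have h2 : -(x τ).1 ≤ 0 := this τ hτ
    linarith
  have inv3 : ∀ τ ∈ Icc 0 b, (x τ).2 ≤ r := by
    apply barrier hb.le hxd2 (by rw [hx0]; exact (abs_le.1 hx₀.2.2).2)
    intro τ hτ hgt
    have hcueq : cu (x τ).2 = r := clampI_eq_hi _ _ _ hgt.le hrr
    simp only [hF, hcueq]
    nlinarith [(hcab (x τ).1).1, (abs_le.1 (hlb τ)).1]
  have inv4 : ∀ τ ∈ Icc 0 b, -r ≤ (x τ).2 := by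
    have := barrier (g := fun τ => -(x τ).2) (g' := fun τ => -((F τ (x τ)).2)) (c := r) hb.le
      (fun τ hτ => (hxd2 τ hτ).neg) (by show -(x 0).2 ≤ r; rw [hx0]; linarith [(abs_le.1 hx₀.2.2).1])
      (by
        intro τ hτ hgt
        have hgt' : r < -(x τ).2 := hgt
        have hx2 : (x τ).2 ≤ -r := by linarith
        have hcueq : cu (x τ).2 = -r := clampI_eq_lo _ _ _ hx2 hrr
        simp only [hF, hcueq]
        nlinarith [(hcab (x τ).1).1, (abs_le.1 (hlb τ)).2])
    intro τ hτ
    have h2 : -(x τ).2 ≤ r := this τ hτ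
    linarith
  refine ⟨x, hx0, ?_, ?_⟩
  · intro τ hτ
    have hcaeq : ca (x τ).1 = (x τ).1 := clampI_eq_self _ _ _ (inv2 τ hτ) (inv1 τ hτ)
    have hcueq : cu (x τ).2 = (x τ).2 := clampI_eq_self _ _ _ (inv4 τ hτ) (inv3 τ hτ)
    have := hxd τ hτ
    simp only [hF, hcaeq, hcueq] at this
    exact this
  · intro τ hτ
    exact ⟨inv2 τ hτ, inv1 τ hτ, abs_le.2 ⟨inv4 τ hτ, inv3 τ hτ⟩⟩
lemma glob_unique (μ lm h : ℝ) (l αp up αq uq : ℝ → ℝ)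
    (hμ : 0 < μ) (hlm : 0 < lm) (hcond : lm < 2 * μ ^ ((3:ℝ)/2))
    (hh : h = (1 - lm / (2 * μ ^ ((3:ℝ)/2))) * min 1 μ) (hh0 : 0 < h)
    (hαp : ∀ τ, HasDerivAt αp (up τ^2 - αp τ) τ)
    (hup : ∀ τ, HasDerivAt up (-(αp τ * up τ) - l τ - μ * up τ) τ)
    (hαq : ∀ τ, HasDerivAt αq (uq τ^2 - αq τ) τ)
    (huq : ∀ τ, HasDerivAt uq (-(αq τ * uq τ) - l τ - μ * uq τ) τ)
    (hDp : ∀ τ, 0 ≤ αp τ ∧ αp τ ≤ (lm/μ)^2 ∧ |up τ| ≤ lm/μ)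
    (hDq : ∀ τ, 0 ≤ αq τ ∧ αq τ ≤ (lm/μ)^2 ∧ |uq τ| ≤ lm/μ) :
    ∀ τ, αq τ = αp τ ∧ uq τ = up τ := by
  intro t
  set r : ℝ := lm/μ with hrdef
  have hr : 0 < r := by positivity
  set M : ℝ := r^4 + 4*r^2 with hM
  have hbd : ∀ τ, (αq τ - αp τ)^2 + (uq τ - up τ)^2 ≤ M := by
    intro τ
    obtain ⟨h1, h2, h3⟩ := hDp τ
    obtain ⟨h4, h5, h6⟩ := hDq τ
    have e3 := abs_le.1 h3
    have e6 := abs_le.1 h6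
    have : (αq τ - αp τ)^2 ≤ (r^2)^2 := by nlinarith
    have : (uq τ - up τ)^2 ≤ (2*r)^2 := by nlinarith
    nlinarith
  have hdec : ∀ n : ℕ, (αq t - αp t)^2 + (uq t - up t)^2 ≤ M * Real.exp (-(2*h)*n) := by
    intro n
    have hd := decay μ lm h (t - n) t l αp up αq uq hμ hlm hcond hh
      (fun τ _ => (hαp τ).hasDerivWithinAt) (fun τ _ => (hup τ).hasDerivWithinAt)
      (fun τ _ => (hαq τ).hasDerivWithinAt) (fun τ _ => (huq τ).hasDerivWithinAt)
      (fun τ _ => ⟨(hDp τ).1, (hDp τ).2.2⟩)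
      t ⟨by linarith [Nat.cast_nonneg (α := ℝ) n], le_refl t⟩
    simp only [show t - (t - (n:ℝ)) = (n:ℝ) by ring] at hd
    exact hd.trans (mul_le_mul_of_nonneg_right (hbd _) (Real.exp_pos _).le)
  have hlim : Tendsto (fun n : ℕ => M * Real.exp (-(2*h)*n)) atTop (nhds 0) := by
    have e : ∀ n : ℕ, M * Real.exp (-(2*h)*n) = M * Real.exp (-(2*h))^n := by
      intro n
      rw [← Real.exp_nat_mul]
      ring_nf
    simp only [e]
    rw [show (0:ℝ) = M * 0 by ring]
    exact (tendsto_pow_atTop_nhds_zero_of_lt_one (Real.exp_nonneg _)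
      (Real.exp_lt_one_iff.2 (by linarith))).const_mul M
  have hle : (αq t - αp t)^2 + (uq t - up t)^2 ≤ 0 := ge_of_tendsto' hlim hdec
  have e1 : (αq t - αp t)^2 = 0 :=
    le_antisymm (by nlinarith [sq_nonneg (uq t - up t)]) (sq_nonneg _)
  have e2 : (uq t - up t)^2 = 0 :=
    le_antisymm (by nlinarith [sq_nonneg (αq t - αp t)]) (sq_nonneg _)
  exact ⟨sub_eq_zero.1 ((pow_eq_zero_iff two_ne_zero).1 e1),
    sub_eq_zero.1 ((pow_eq_zero_iff two_ne_zero).1 e2)⟩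

set_option maxHeartbeats 1000000 in
lemma exists_periodic (T μ lm h : ℝ) (hT : 0 < T) (hμ : 0 < μ) (l : ℝ → ℝ)
    (hl : Continuous l) (hlper : Function.Periodic l T) (hlb : ∀ τ, |l τ| ≤ lm)
    (hlm : 0 < lm) (hcond : lm < 2 * μ ^ ((3:ℝ)/2))
    (hh : h = (1 - lm / (2 * μ ^ ((3:ℝ)/2))) * min 1 μ) (hh0 : 0 < h) :
    ∃ z : ℝ → ℝ × ℝ,
      (∀ τ, HasDerivAt z
        ((z τ).2^2 - (z τ).1, -((z τ).1*(z τ).2) - l τ - μ*(z τ).2) τ) ∧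
      (∀ τ, 0 ≤ (z τ).1 ∧ (z τ).1 ≤ (lm/μ)^2 ∧ |(z τ).2| ≤ lm/μ) := by
  -- choose the number of periods N
  obtain ⟨N, hN, hN1⟩ : ∃ N : ℕ, Real.sqrt 2 * Real.exp (-h*T)^N < 1 ∧ 1 ≤ N := by
    have htend : Tendsto (fun n : ℕ => Real.sqrt 2 * Real.exp (-h*T)^n) atTop (nhds 0) := by
      rw [show (0:ℝ) = Real.sqrt 2 * 0 by ring]
      exact (tendsto_pow_atTop_nhds_zero_of_lt_one (Real.exp_nonneg _)
        (Real.exp_lt_one_iff.2 (by nlinarith))).const_mul _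
    exact ((htend.eventually_lt_const (by norm_num : (0:ℝ) < 1)).and
      (eventually_ge_atTop 1)).exists
  set b : ℝ := (N:ℝ) * T with hbdef
  have hb : 0 < b := by
    have : (1:ℝ) ≤ (N:ℝ) := by exact_mod_cast hN1
    nlinarith
  have hKval : Real.sqrt 2 * Real.exp (-h*b) < 1 := by
    have : Real.exp (-h*b) = Real.exp (-h*T)^N := by
      rw [← Real.exp_nat_mul]
      congr 1
      rw [hbdef]; ring
    rw [this]; exact hN
  have hlbper : Function.Periodic l b := by
    simpa [hbdef] using hlper.nat_mul N
  set r : ℝ := lm/μ with hrdef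
  have hr : 0 < r := by positivity
  set Dset : Set (ℝ × ℝ) := {p : ℝ × ℝ | 0 ≤ p.1 ∧ p.1 ≤ r^2 ∧ |p.2| ≤ r} with hDset
  have hDclosed : IsClosed Dset := by
    have : Dset = ((fun p : ℝ×ℝ => p.1) ⁻¹' Ici 0) ∩
        (((fun p : ℝ×ℝ => p.1) ⁻¹' Iic (r^2)) ∩ ((fun p : ℝ×ℝ => |p.2|) ⁻¹' Iic r)) := by
      ext p; simp [hDset, and_assoc]
    rw [this]
    exact (isClosed_Ici.preimage continuous_fst).inter
      ((isClosed_Iic.preimage continuous_fst).inter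
        (isClosed_Iic.preimage (continuous_snd.abs)))
  -- solution selector
  have hsol : ∀ p ∈ Dset, ∃ x : ℝ → ℝ × ℝ, x 0 = p ∧
      (∀ τ ∈ Icc 0 b, HasDerivWithinAt x
        ((x τ).2^2 - (x τ).1, -((x τ).1*(x τ).2) - l τ - μ*(x τ).2) (Icc 0 b) τ) ∧
      (∀ τ ∈ Icc 0 b, 0 ≤ (x τ).1 ∧ (x τ).1 ≤ (lm/μ)^2 ∧ |(x τ).2| ≤ lm/μ) := by
    intro p hp
    exact exists_sol μ lm b l hμ hlm hl hlb hb p ⟨hp.1, hp.2.1, hp.2.2⟩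
  classical
  set Q : ℝ × ℝ → ℝ × ℝ := fun p => if hp : p ∈ Dset then (hsol p hp).choose b else p
    with hQdef
  have hQval : ∀ p (hp : p ∈ Dset), Q p = (hsol p hp).choose b := by
    intro p hp
    simp only [hQdef, dif_pos hp]
  have hbIcc : b ∈ Icc 0 b := ⟨hb.le, le_rfl⟩
  have hQmaps : MapsTo Q Dset Dset := by
    intro p hp
    rw [hQval p hp]
    exact ((hsol p hp).choose_spec.2.2 b hbIcc)
  -- contraction estimate
  have hcontr : ∀ p ∈ Dset, ∀ q ∈ Dset,
      dist (Q p) (Q q) ≤ (Real.sqrt 2 * Real.exp (-h*b)) * dist p q := by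
    intro p hp q hq
    obtain ⟨hp0, hpd, hpD⟩ := (hsol p hp).choose_spec
    obtain ⟨hq0, hqd, hqD⟩ := (hsol q hq).choose_spec
    set xp := (hsol p hp).choose
    set xq := (hsol q hq).choose
    have key := decay μ lm h 0 b l (fun σ => (xp σ).1) (fun σ => (xp σ).2)
      (fun σ => (xq σ).1) (fun σ => (xq σ).2) hμ hlm hcond hh
      (fun τ hτ => hdw_fst (hpd τ hτ)) (fun τ hτ => hdw_snd (hpd τ hτ))
      (fun τ hτ => hdw_fst (hqd τ hτ)) (fun τ hτ => hdw_snd (hqd τ hτ))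
      (fun τ hτ => ⟨(hpD τ hτ).1, (hpD τ hτ).2.2⟩) b hbIcc
    rw [hp0, hq0] at key
    have hd1 : |p.1 - q.1| ≤ dist p q := by
      rw [← Real.dist_eq]; exact le_max_left _ _
    have hd2 : |p.2 - q.2| ≤ dist p q := by
      rw [← Real.dist_eq]; exact le_max_right _ _
    have h0bd : (q.1 - p.1)^2 + (q.2 - p.2)^2 ≤ 2 * dist p q^2 := by
      nlinarith [sq_abs (p.1 - q.1), sq_abs (p.2 - q.2), abs_nonneg (p.1 - q.1),
        abs_nonneg (p.2 - q.2), dist_nonneg (x := p) (y := q)]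
    have hmax : dist (xp b) (xq b)^2 ≤
        ((xq b).1 - (xp b).1)^2 + ((xq b).2 - (xp b).2)^2 := by
      rw [Prod.dist_eq]
      rcases max_cases (dist (xp b).1 (xq b).1) (dist (xp b).2 (xq b).2) with
        ⟨he, _⟩ | ⟨he, _⟩ <;> rw [he, Real.dist_eq] <;>
        nlinarith [sq_abs ((xp b).1 - (xq b).1), sq_abs ((xp b).2 - (xq b).2),
          sq_nonneg ((xq b).1 - (xp b).1), sq_nonneg ((xq b).2 - (xp b).2)]
    have hsq : dist (xp b) (xq b)^2 ≤ ((Real.sqrt 2 * Real.exp (-h*b)) * dist p q)^2 := by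
      have hexp2 : Real.exp (-h*b)^2 = Real.exp (-(2*h)*(b-0)) := by
        rw [sq, ← Real.exp_add]; congr 1; ring
      have hs2 : Real.sqrt 2 ^2 = 2 := Real.sq_sqrt (by norm_num)
      have hE : (0:ℝ) < Real.exp (-(2*h)*(b-0)) := Real.exp_pos _
      calc dist (xp b) (xq b)^2 ≤ ((xq b).1 - (xp b).1)^2 + ((xq b).2 - (xp b).2)^2 := hmax
        _ ≤ ((q.1 - p.1)^2 + (q.2 - p.2)^2) * Real.exp (-(2*h)*(b-0)) := key
        _ ≤ (2 * dist p q^2) * Real.exp (-(2*h)*(b-0)) :=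
            mul_le_mul_of_nonneg_right h0bd hE.le
        _ = ((Real.sqrt 2 * Real.exp (-h*b)) * dist p q)^2 := by
            rw [mul_pow, mul_pow, hs2, hexp2]; ring
    have := Real.sqrt_le_sqrt hsq
    rw [Real.sqrt_sq dist_nonneg, Real.sqrt_sq (by positivity)] at this
    rw [hQval p hp, hQval q hq]
    exact this
  -- Banach fixed point
  set K : NNReal := Real.toNNReal (Real.sqrt 2 * Real.exp (-h*b)) with hK
  have hKc : (K : ℝ) = Real.sqrt 2 * Real.exp (-h*b) :=
    Real.coe_toNNReal _ (by positivity)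
  have hK1 : K < 1 := by
    rw [← NNReal.coe_lt_coe, hKc, NNReal.coe_one]
    exact hKval
  have hzero : ((0:ℝ), (0:ℝ)) ∈ Dset := by
    refine ⟨le_rfl, by positivity, by simp [abs_nonneg]; positivity⟩
  have hCW : ContractingWith K (hQmaps.restrict Q Dset Dset) := by
    constructor
    · exact hK1
    · apply LipschitzWith.of_dist_le_mul
      intro x y
      rw [Subtype.dist_eq, Subtype.dist_eq, hKc]
      have : (hQmaps.restrict Q Dset Dset x : ℝ × ℝ) = Q x := rfl
      rw [this, (rfl : (hQmaps.restrict Q Dset Dset y : ℝ × ℝ) = Q y)]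
      exact hcontr x x.2 y y.2
  obtain ⟨y, hyD, hyfix, -, -⟩ := hCW.exists_fixedPoint' hDclosed.isComplete hQmaps
    hzero (edist_ne_top _ _)
  obtain ⟨hx0, hxd, hxD⟩ := (hsol y hyD).choose_spec
  set x : ℝ → ℝ × ℝ := (hsol y hyD).choose with hxdef
  have hxb : x b = y := by
    have := hyfix
    rw [Function.IsFixedPt, hQval y hyD] at this
    exact this
  set z : ℝ → ℝ × ℝ := fun τ => x (τ - b * (⌊τ/b⌋ : ℤ)) with hzdef
  have hfr : ∀ τ : ℝ, 0 ≤ τ - b * (⌊τ/b⌋ : ℤ) ∧ τ - b * (⌊τ/b⌋ : ℤ) < b := by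
    intro τ
    have h1 : ((⌊τ/b⌋ : ℤ) : ℝ) ≤ τ/b := Int.floor_le _
    have h2 : τ/b < (⌊τ/b⌋ : ℤ) + 1 := Int.lt_floor_add_one _
    have e1 : b * (τ/b) = τ := by field_simp
    constructor
    · nlinarith [mul_le_mul_of_nonneg_left h1 hb.le]
    · nlinarith [(div_lt_iff₀ hb).1 h2]
  have hcong : ∀ (n : ℤ) (σ : ℝ), b * (n:ℝ) ≤ σ → σ < b * ((n:ℝ)+1) →
      z σ = x (σ - b * (n:ℝ)) := by
    intro n σ h1 h2
    have hfl : ⌊σ/b⌋ = n := by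
      rw [Int.floor_eq_iff]
      constructor
      · rw [le_div_iff₀ hb]; nlinarith
      · rw [div_lt_iff₀ hb]; nlinarith
    simp only [hzdef, hfl]
  have hcongIcc : ∀ (n : ℤ) (σ : ℝ), b * (n:ℝ) ≤ σ → σ ≤ b * ((n:ℝ)+1) →
      z σ = x (σ - b * (n:ℝ)) := by
    intro n σ h1 h2
    rcases lt_or_eq_of_le h2 with h2' | h2'
    · exact hcong n σ h1 h2'
    · have e1 : z σ = x (σ - b * ((n:ℝ)+1)) := by
        have := hcong (n+1) σ (by push_cast; linarith) (by push_cast; nlinarith)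
        rw [this]; push_cast; ring_nf
      rw [e1, h2']
      rw [show b*((n:ℝ)+1) - b*((n:ℝ)+1) = 0 by ring, show b*((n:ℝ)+1) - b*(n:ℝ) = b by ring]
      rw [hx0, hxb]
  have hzval : ∀ τ : ℝ, z τ = x (τ - b * ((⌊τ/b⌋ : ℤ) : ℝ)) := fun τ => rfl
  have hzD : ∀ τ : ℝ, 0 ≤ (z τ).1 ∧ (z τ).1 ≤ (lm/μ)^2 ∧ |(z τ).2| ≤ lm/μ := by
    intro τ
    rw [hzval τ]
    exact hxD _ ⟨(hfr τ).1, (hfr τ).2.le⟩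
  refine ⟨z, ?_, hzD⟩
  intro τ
  set n : ℤ := ⌊τ/b⌋ with hn
  have hfr1 := (hfr τ).1
  have hfr2 := (hfr τ).2
  have hlτ : l (τ - b*(n:ℝ)) = l τ := by
    rw [show τ - b*(n:ℝ) = τ - (n:ℝ)*b by ring]
    exact hlbper.sub_int_mul_eq n
  rcases eq_or_lt_of_le hfr1 with hzero | hpos
  · -- boundary case : τ = b*n
    have hτeq : τ = b*(n:ℝ) := by linarith
    have hlτ0 : l τ = l 0 := by
      rw [hτeq, show b*(n:ℝ) = (n:ℝ)*b by ring]
      exact hlbper.int_mul_eq n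
    have hzy : z τ = y := by
      rw [hzval τ, ← hn, show τ - b*(n:ℝ) = 0 by linarith, hx0]
    set E : ℝ × ℝ := (y.2^2 - y.1, -(y.1*y.2) - l τ - μ*y.2) with hE
    have h0E : HasDerivWithinAt x E (Icc 0 b) 0 := by
      have := hxd 0 ⟨le_rfl, hb.le⟩
      rw [show ((x 0).2^2 - (x 0).1, -((x 0).1*(x 0).2) - l 0 - μ*(x 0).2) = E by
        rw [hx0, hE, hlτ0]] at this
      exact this
    have hbE : HasDerivWithinAt x E (Icc 0 b) b := by
      have := hxd b hbIcc
      have hlb0 : l b = l 0 := by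
        have := hlbper 0
        simpa using this
      rw [show ((x b).2^2 - (x b).1, -((x b).1*(x b).2) - l b - μ*(x b).2) = E by
        rw [hxb, hE, hlτ0, hlb0]] at this
      exact this
    -- right derivative
    have hmapR : MapsTo (fun σ : ℝ => σ - b*(n:ℝ)) (Icc (b*(n:ℝ)) (b*((n:ℝ)+1))) (Icc 0 b) := by
      intro σ hσ
      simp only [mem_Icc] at hσ ⊢
      constructor
      · linarith [hσ.1]
      · nlinarith [hσ.2]
    have hidR : HasDerivWithinAt (fun σ : ℝ => σ - b*(n:ℝ)) 1 (Icc (b*(n:ℝ)) (b*((n:ℝ)+1))) τ :=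
      ((hasDerivAt_id τ).sub_const _).hasDerivWithinAt
    have hcompR : HasDerivWithinAt (fun σ => x (σ - b*(n:ℝ))) E
        (Icc (b*(n:ℝ)) (b*((n:ℝ)+1))) τ := by
      have hg : HasDerivWithinAt x E (Icc 0 b) ((fun σ : ℝ => σ - b*(n:ℝ)) τ) := by
        rw [show (fun σ : ℝ => σ - b*(n:ℝ)) τ = 0 by simp; linarith]
        exact h0E
      have := HasDerivWithinAt.scomp τ hg hidR hmapR
      simpa [Function.comp_def] using this
    have hzR : HasDerivWithinAt z E (Icc (b*(n:ℝ)) (b*((n:ℝ)+1))) τ :=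
      hcompR.congr (fun σ hσ => hcongIcc n σ hσ.1 hσ.2)
        (hcongIcc n τ (by linarith) (by nlinarith))
    have hR : HasDerivWithinAt z E (Ici τ) τ :=
      hzR.mono_of_mem_nhdsWithin (Icc_mem_nhdsGE_of_mem ⟨by rw [hτeq], by nlinarith⟩)
    -- left derivative
    have hmapL : MapsTo (fun σ : ℝ => σ - b*((n:ℝ)-1)) (Icc (b*((n:ℝ)-1)) (b*(n:ℝ))) (Icc 0 b) := by
      intro σ hσ
      simp only [mem_Icc] at hσ ⊢
      constructor
      · linarith [hσ.1]
      · nlinarith [hσ.2]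
    have hidL : HasDerivWithinAt (fun σ : ℝ => σ - b*((n:ℝ)-1)) 1 (Icc (b*((n:ℝ)-1)) (b*(n:ℝ))) τ :=
      ((hasDerivAt_id τ).sub_const _).hasDerivWithinAt
    have hcompL : HasDerivWithinAt (fun σ => x (σ - b*((n:ℝ)-1))) E
        (Icc (b*((n:ℝ)-1)) (b*(n:ℝ))) τ := by
      have hg : HasDerivWithinAt x E (Icc 0 b) ((fun σ : ℝ => σ - b*((n:ℝ)-1)) τ) := by
        rw [show (fun σ : ℝ => σ - b*((n:ℝ)-1)) τ = b by simp; linarith]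
        exact hbE
      have := HasDerivWithinAt.scomp τ hg hidL hmapL
      simpa [Function.comp_def] using this
    have hcongL : ∀ σ ∈ Icc (b*((n:ℝ)-1)) (b*(n:ℝ)), z σ = x (σ - b*((n:ℝ)-1)) := by
      intro σ hσ
      have := hcongIcc (n-1) σ (by push_cast; linarith [hσ.1]) (by push_cast; linarith [hσ.2])
      rw [this]
      push_cast
      ring_nf
    have hzL : HasDerivWithinAt z E (Icc (b*((n:ℝ)-1)) (b*(n:ℝ))) τ :=
      hcompL.congr hcongL (hcongL τ ⟨by nlinarith, by rw [hτeq]⟩)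
    have hL : HasDerivWithinAt z E (Iic τ) τ :=
      hzL.mono_of_mem_nhdsWithin (Icc_mem_nhdsLE_of_mem ⟨by nlinarith, by rw [hτeq]⟩)
    have hunion := hL.union hR
    rw [Iic_union_Ici] at hunion
    have hfin := hasDerivWithinAt_univ.1 hunion
    rw [hzy]
    exact hfin
  · -- interior case
    have hIoo1 : b*(n:ℝ) < τ := by linarith
    have hIoo2 : τ < b*((n:ℝ)+1) := by nlinarith
    have hmem : τ - b*(n:ℝ) ∈ Icc 0 b := ⟨hfr1, hfr2.le⟩
    have hx_at : HasDerivAt x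
        ((x (τ - b*(n:ℝ))).2^2 - (x (τ - b*(n:ℝ))).1,
         -((x (τ - b*(n:ℝ))).1*(x (τ - b*(n:ℝ))).2) - l (τ - b*(n:ℝ)) - μ*(x (τ - b*(n:ℝ))).2)
        (τ - b*(n:ℝ)) :=
      (hxd _ hmem).hasDerivAt (Icc_mem_nhds hpos hfr2)
    have hid : HasDerivAt (fun σ : ℝ => σ - b*(n:ℝ)) 1 τ := (hasDerivAt_id τ).sub_const _
    have hshift : HasDerivAt (fun σ => x (σ - b*(n:ℝ)))
        ((x (τ - b*(n:ℝ))).2^2 - (x (τ - b*(n:ℝ))).1,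
         -((x (τ - b*(n:ℝ))).1*(x (τ - b*(n:ℝ))).2) - l (τ - b*(n:ℝ)) - μ*(x (τ - b*(n:ℝ))).2)
        τ := by
      have := HasDerivAt.scomp τ hx_at hid
      simpa [Function.comp_def] using this
    have hev : z =ᶠ[nhds τ] (fun σ => x (σ - b*(n:ℝ))) := by
      filter_upwards [Ioo_mem_nhds hIoo1 hIoo2] with σ hσ
      exact hcong n σ hσ.1.le hσ.2
    have hfin := hshift.congr_of_eventuallyEq hev
    have hzτ : z τ = x (τ - b*(n:ℝ)) := hcong n τ hIoo1.le hIoo2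
    rw [hzτ, ← hlτ]
    exact hfin
end AuxForUniquePeriodic
open Set in

/-- Theorem 5: for the reduced system with viscous friction `α' = u² - α`,
`u' = -αu - λ(τ) - μu`, with `λ` continuous `T`-periodic, `λ_m = sup |λ| > 0`, `μ > 0`, and
`2·μ^{3/2} > λ_m`, the rectangle `D = {(α, u) : 0 ≤ α ≤ (λ_m/μ)², |u| ≤ λ_m/μ}` contains
exactly one `T`-periodic solution, and every solution starting in `D` converges to it
exponentially fast as `τ → +∞`. -/
theorem unique_periodic_solution_friction
    (T μ lm : ℝ) (hT : 0 < T) (hμ : 0 < μ)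
    (l : ℝ → ℝ) (hl : Continuous l) (hlper : Function.Periodic l T)
    (hlm : IsLUB (Set.range fun τ : ℝ => |l τ|) lm) (hlmpos : 0 < lm)
    (hcond : lm < 2 * μ ^ ((3 : ℝ) / 2)) :
    ∃ αp up : ℝ → ℝ,
      ((∀ τ : ℝ, HasDerivAt αp (up τ ^ 2 - αp τ) τ) ∧
       (∀ τ : ℝ, HasDerivAt up (-(αp τ * up τ) - l τ - μ * up τ) τ) ∧
       (∀ τ : ℝ, αp (τ + T) = αp τ ∧ up (τ + T) = up τ) ∧
       (∀ τ : ℝ, 0 ≤ αp τ ∧ αp τ ≤ (lm / μ) ^ 2 ∧ |up τ| ≤ lm / μ)) ∧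
      -- uniqueness: any other T-periodic solution with values in D coincides with (αp, up)
      (∀ αq uq : ℝ → ℝ,
        (∀ τ : ℝ, HasDerivAt αq (uq τ ^ 2 - αq τ) τ) →
        (∀ τ : ℝ, HasDerivAt uq (-(αq τ * uq τ) - l τ - μ * uq τ) τ) →
        (∀ τ : ℝ, αq (τ + T) = αq τ ∧ uq (τ + T) = uq τ) →
        (∀ τ : ℝ, 0 ≤ αq τ ∧ αq τ ≤ (lm / μ) ^ 2 ∧ |uq τ| ≤ lm / μ) →
        ∀ τ : ℝ, αq τ = αp τ ∧ uq τ = up τ) ∧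
      -- exponential convergence of every solution starting in D
      (∀ (α u : ℝ → ℝ) (τ₀ : ℝ),
        (∀ τ : ℝ, τ₀ ≤ τ → HasDerivAt α (u τ ^ 2 - α τ) τ) →
        (∀ τ : ℝ, τ₀ ≤ τ → HasDerivAt u (-(α τ * u τ) - l τ - μ * u τ) τ) →
        (0 ≤ α τ₀ ∧ α τ₀ ≤ (lm / μ) ^ 2 ∧ |u τ₀| ≤ lm / μ) →
        ∃ C > 0, ∃ h > 0, ∀ τ : ℝ, τ₀ ≤ τ →
          Real.sqrt ((α τ - αp τ) ^ 2 + (u τ - up τ) ^ 2) ≤ C * Real.exp (-h * τ)) := by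
  have hlb : ∀ τ, |l τ| ≤ lm := fun τ => hlm.1 ⟨τ, rfl⟩
  set h : ℝ := (1 - lm / (2 * μ ^ ((3:ℝ)/2))) * min 1 μ with hh
  have hh0 : 0 < h := by
    apply mul_pos
    · rw [sub_pos, div_lt_one (by positivity)]
      exact hcond
    · exact lt_min one_pos hμ
  obtain ⟨z, hzd, hzD⟩ := exists_periodic T μ lm h hT hμ l hl hlper hlb hlmpos hcond hh hh0
  set αp : ℝ → ℝ := fun τ => (z τ).1 with hαpdef
  set up : ℝ → ℝ := fun τ => (z τ).2 with hupdef
  have hαpd : ∀ τ, HasDerivAt αp (up τ ^ 2 - αp τ) τ := fun τ => by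
    simpa using hda_fst (hzd τ)
  have hupd : ∀ τ, HasDerivAt up (-(αp τ * up τ) - l τ - μ * up τ) τ := fun τ => by
    simpa using hda_snd (hzd τ)
  have hDz : ∀ τ, 0 ≤ αp τ ∧ αp τ ≤ (lm/μ)^2 ∧ |up τ| ≤ lm/μ := hzD
  -- shifted solution for periodicity
  have hαsd : ∀ τ, HasDerivAt (fun σ => αp (σ + T))
      ((fun σ => up (σ + T)) τ ^ 2 - (fun σ => αp (σ + T)) τ) τ := by
    intro τ
    have := (hαpd (τ + T)).scomp τ ((hasDerivAt_id τ).add_const T)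
    simpa [Function.comp_def] using this
  have husd : ∀ τ, HasDerivAt (fun σ => up (σ + T))
      (-((fun σ => αp (σ + T)) τ * (fun σ => up (σ + T)) τ) - l τ
        - μ * (fun σ => up (σ + T)) τ) τ := by
    intro τ
    have := (hupd (τ + T)).scomp τ ((hasDerivAt_id τ).add_const T)
    simp only [smul_eq_mul, mul_one, one_smul] at this
    have hlT : l (τ + T) = l τ := hlper τ
    simp only [hlT] at this
    simpa [Function.comp_def] using this
  have hper := glob_unique μ lm h l αp up (fun σ => αp (σ + T)) (fun σ => up (σ + T))
    hμ hlmpos hcond hh hh0 hαpd hupd hαsd husd hDz (fun τ => hDz (τ + T))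
  refine ⟨αp, up, ⟨hαpd, hupd, fun τ => hper τ, hDz⟩, ?_, ?_⟩
  · intro αq uq hαqd huqd _ hDq
    exact glob_unique μ lm h l αp up αq uq hμ hlmpos hcond hh hh0
      hαpd hupd hαqd huqd hDz hDq
  · intro α u τ₀ hαd hud _
    set V₀ : ℝ := (α τ₀ - αp τ₀)^2 + (u τ₀ - up τ₀)^2 with hV₀
    have hV₀0 : 0 ≤ V₀ := by positivity
    refine ⟨Real.sqrt V₀ * Real.exp (h * τ₀) + 1, by positivity, h, hh0, ?_⟩
    intro τ hτ
    have key := decay μ lm h τ₀ τ l αp up α u hμ hlmpos hcond hh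
      (fun σ _ => (hαpd σ).hasDerivWithinAt) (fun σ _ => (hupd σ).hasDerivWithinAt)
      (fun σ hσ => (hαd σ hσ.1).hasDerivWithinAt) (fun σ hσ => (hud σ hσ.1).hasDerivWithinAt)
      (fun σ _ => ⟨(hDz σ).1, (hDz σ).2.2⟩) τ ⟨hτ, le_rfl⟩
    have hs := Real.sqrt_le_sqrt key
    have hexp : Real.exp (-(2*h)*(τ - τ₀)) = Real.exp (-h*(τ - τ₀))^2 := by
      rw [sq, ← Real.exp_add]; ring_nf
    rw [hexp, Real.sqrt_mul hV₀0, Real.sqrt_sq (Real.exp_pos _).le] at hs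
    calc Real.sqrt ((α τ - αp τ)^2 + (u τ - up τ)^2)
        ≤ Real.sqrt V₀ * Real.exp (-h*(τ - τ₀)) := hs
      _ = (Real.sqrt V₀ * Real.exp (h * τ₀)) * Real.exp (-h * τ) := by
          rw [mul_assoc, ← Real.exp_add]; ring_nf
      _ ≤ (Real.sqrt V₀ * Real.exp (h * τ₀) + 1) * Real.exp (-h * τ) := by
          apply mul_le_mul_of_nonneg_right _ (Real.exp_pos _).le
          linarith
end

section
/- Let λ : ℝ → ℝ be continuous with λ_m = sup_τ |λ(τ)| < ∞ and let μ > 0. Then the rectangle D = { (α, u) : 0 ≤ α ≤ (λ_m/μ)², |u| ≤ λ_m/μ } is forward invariant under the flow of the system α' = u² − α, u' = −αu − λ(τ) − μu: every solution with initial condition in D at some time τ₀ remains in D for all τ ≥ τ₀. -/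
open Filter

private lemma le_of_deriv_nonneg {g g' : ℝ → ℝ} {a b : ℝ}
    (hab : a ≤ b)
    (hg : ∀ t, a ≤ t → HasDerivAt g (g' t) t)
    (h0 : ∀ t, a ≤ t → 0 ≤ g' t) : g a ≤ g b := by
  have hmono : MonotoneOn g (Set.Ici a) := by
    apply monotoneOn_of_deriv_nonneg (convex_Ici a)
    · exact fun x hx => (hg x hx).continuousAt.continuousWithinAt
    · intro x hx
      rw [interior_Ici] at hx
      exact (hg x hx.le).differentiableAt.differentiableWithinAt
    · intro x hx
      rw [interior_Ici] at hx
      rw [(hg x hx.le).deriv]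
      exact h0 x hx.le
  exact hmono Set.self_mem_Ici hab hab

/-- Forward invariance of the rectangle `D = {(α, u) : 0 ≤ α ≤ (λ_m/μ)², |u| ≤ λ_m/μ}`
under the flow of the reduced system with viscous friction `α' = u² - α`,
`u' = -αu - λ(τ) - μu`: every solution starting in `D` at time `τ₀` remains in `D` for all
`τ ≥ τ₀`. -/
theorem rectangle_forward_invariant
    (μ lm : ℝ) (hμ : 0 < μ)
    (l : ℝ → ℝ) (hl : Continuous l)
    (hlm : IsLUB (Set.range fun τ : ℝ => |l τ|) lm)
    (α u : ℝ → ℝ) (τ₀ : ℝ)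
    (hα : ∀ τ : ℝ, τ₀ ≤ τ → HasDerivAt α (u τ ^ 2 - α τ) τ)
    (hu : ∀ τ : ℝ, τ₀ ≤ τ → HasDerivAt u (-(α τ * u τ) - l τ - μ * u τ) τ)
    (h0 : 0 ≤ α τ₀ ∧ α τ₀ ≤ (lm / μ) ^ 2 ∧ |u τ₀| ≤ lm / μ) :
    ∀ τ : ℝ, τ₀ ≤ τ → 0 ≤ α τ ∧ α τ ≤ (lm / μ) ^ 2 ∧ |u τ| ≤ lm / μ := by
  set M : ℝ := lm / μ with hMdef
  have hlb : ∀ t : ℝ, |l t| ≤ lm := fun t => hlm.1 ⟨t, rfl⟩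
  have hlm0 : 0 ≤ lm := le_trans (abs_nonneg _) (hlb 0)
  have hM0 : 0 ≤ M := div_nonneg hlm0 hμ.le
  have hμM : μ * M = lm := by rw [hMdef]; field_simp
  -- the auxiliary function g = α * exp
  have hg : ∀ t, τ₀ ≤ t → HasDerivAt (fun s => α s * Real.exp s)
      (u t ^ 2 * Real.exp t) t := by
    intro t ht
    have this : HasDerivAt (fun s => α s * Real.exp s) _ t := (hα t ht).mul (Real.hasDerivAt_exp t)
    convert this using 1
    ring
  -- Part 1: α ≥ 0 on [τ₀, ∞)
  have hα0 : ∀ t, τ₀ ≤ t → 0 ≤ α t := by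
    intro t ht
    have hle : α τ₀ * Real.exp τ₀ ≤ α t * Real.exp t :=
      le_of_deriv_nonneg ht hg (fun s _ => by positivity)
    have h1 : 0 ≤ α t * Real.exp t :=
      le_trans (mul_nonneg h0.1 (Real.exp_pos τ₀).le) hle
    by_contra hc
    push_neg at hc
    nlinarith [Real.exp_pos t]
  -- continuity of α on the right of τ₀, via a continuous extension
  set ac : ℝ → ℝ := fun s => α (max s τ₀) with hacdef
  have hαcont : ContinuousOn α (Set.Ici τ₀) :=
    fun x hx => (hα x hx).continuousAt.continuousWithinAt
  have hac_cont : Continuous ac := by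
    apply hαcont.comp_continuous (continuous_id.max continuous_const)
    intro x; exact Set.mem_Ici.mpr (le_max_right _ _)
  have hac_eq : ∀ t, τ₀ ≤ t → ac t = α t := by
    intro t ht; simp only [hacdef, max_eq_left ht]
  -- integrating factor
  set A : ℝ → ℝ := fun t => ∫ s in τ₀..t, (ac s + μ) with hAdef
  have hA : ∀ t, HasDerivAt A (ac t + μ) t := fun t =>
    ((hac_cont.add continuous_const).integral_hasStrictDerivAt τ₀ t).hasDerivAt
  have hAcont : Continuous A := by
    rw [continuous_iff_continuousAt]; exact fun t => (hA t).continuousAt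
  have hA0 : A τ₀ = 0 := by simp [hAdef]
  -- derivative of w = u * exp(A)
  have hw : ∀ t, τ₀ ≤ t → HasDerivAt (fun s => u s * Real.exp (A s))
      (-(l t) * Real.exp (A t)) t := by
    intro t ht
    have hExpA : HasDerivAt (fun s => Real.exp (A s)) ((ac t + μ) * Real.exp (A t)) t := by
      have := (hA t).exp
      convert this using 1; ring
    have this : HasDerivAt (fun s => u s * Real.exp (A s)) _ t := (hu t ht).mul hExpA
    convert this using 1
    rw [hac_eq t ht]
    ring
  -- Part 2: |u| ≤ M on [τ₀, ∞)
  have hub : ∀ t, τ₀ ≤ t → |u t| ≤ M := by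
    intro t ht
    -- FTC for w
    have hftc : u t * Real.exp (A t) - u τ₀ * Real.exp (A τ₀)
        = ∫ s in τ₀..t, (-(l s) * Real.exp (A s)) := by
      rw [intervalIntegral.integral_eq_sub_of_hasDerivAt]
      · intro x hx
        rw [Set.uIcc_of_le ht] at hx
        exact hw x hx.1
      · exact ((hl.neg.mul (hAcont.rexp)).intervalIntegrable _ _)
    -- FTC for exp(A)
    have hftc2 : Real.exp (A t) - Real.exp (A τ₀)
        = ∫ s in τ₀..t, ((ac s + μ) * Real.exp (A s)) := by
      rw [intervalIntegral.integral_eq_sub_of_hasDerivAt]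
      · intro x hx
        have this : HasDerivAt (fun s => Real.exp (A s)) _ x := (hA x).exp
        exact this.congr_deriv (by ring)
      · exact (((hac_cont.add continuous_const).mul (hAcont.rexp)).intervalIntegrable _ _)
    -- bound the integral of exp(A)
    have hIexp : μ * (∫ s in τ₀..t, Real.exp (A s)) ≤ Real.exp (A t) - 1 := by
      rw [hA0] at hftc2
      rw [Real.exp_zero] at hftc2
      rw [hftc2, ← intervalIntegral.integral_const_mul]
      apply intervalIntegral.integral_mono_on ht
      · exact ((continuous_const.mul hAcont.rexp).intervalIntegrable _ _)
      · exact (((hac_cont.add continuous_const).mul (hAcont.rexp)).intervalIntegrable _ _)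
      · intro x hx
        have h1 : 0 ≤ ac x := by rw [hac_eq x hx.1]; exact hα0 x hx.1
        nlinarith [Real.exp_pos (A x)]
    -- bound |w t|
    have hbound : |u t * Real.exp (A t)| ≤ M + lm * ∫ s in τ₀..t, Real.exp (A s) := by
      have h1 : |u t * Real.exp (A t) - u τ₀ * Real.exp (A τ₀)|
          ≤ ∫ s in τ₀..t, |(-(l s)) * Real.exp (A s)| := by
        rw [hftc]
        exact intervalIntegral.abs_integral_le_integral_abs ht
      have h2 : (∫ s in τ₀..t, |(-(l s)) * Real.exp (A s)|)
          ≤ ∫ s in τ₀..t, lm * Real.exp (A s) := by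
        apply intervalIntegral.integral_mono_on ht
        · exact (((hl.neg.mul hAcont.rexp).abs).intervalIntegrable _ _)
        · exact ((continuous_const.mul hAcont.rexp).intervalIntegrable _ _)
        · intro x _
          rw [abs_mul, abs_neg, abs_of_pos (Real.exp_pos _)]
          exact mul_le_mul_of_nonneg_right (hlb x) (Real.exp_pos _).le
      rw [intervalIntegral.integral_const_mul] at h2
      have h3 : |u τ₀ * Real.exp (A τ₀)| ≤ M := by
        rw [hA0, Real.exp_zero, mul_one]
        exact h0.2.2
      calc |u t * Real.exp (A t)|
          ≤ |u τ₀ * Real.exp (A τ₀)| + |u t * Real.exp (A t) - u τ₀ * Real.exp (A τ₀)| := by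
            have := abs_add_le (u τ₀ * Real.exp (A τ₀))
              (u t * Real.exp (A t) - u τ₀ * Real.exp (A τ₀))
            simpa using this
        _ ≤ M + lm * ∫ s in τ₀..t, Real.exp (A s) := add_le_add h3 (h1.trans h2)
    -- conclude
    have hEA : (0:ℝ) < Real.exp (A t) := Real.exp_pos _
    have key : |u t| * Real.exp (A t) ≤ M * Real.exp (A t) := by
      have habs : |u t| * Real.exp (A t) = |u t * Real.exp (A t)| := by
        rw [abs_mul, abs_of_pos hEA]
      rw [habs]
      calc |u t * Real.exp (A t)| ≤ M + lm * ∫ s in τ₀..t, Real.exp (A s) := hbound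
        _ ≤ M + M * (Real.exp (A t) - 1) := by
            have : lm * (∫ s in τ₀..t, Real.exp (A s)) ≤ M * (Real.exp (A t) - 1) := by
              rw [← hμM]
              calc μ * M * (∫ s in τ₀..t, Real.exp (A s))
                  = M * (μ * (∫ s in τ₀..t, Real.exp (A s))) := by ring
                _ ≤ M * (Real.exp (A t) - 1) := mul_le_mul_of_nonneg_left hIexp hM0
            linarith
        _ = M * Real.exp (A t) := by ring
    exact le_of_mul_le_mul_right key hEA
  -- Part 3: α ≤ M² on [τ₀, ∞)
  have hαup : ∀ t, τ₀ ≤ t → α t ≤ M ^ 2 := by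
    intro t ht
    have hcomp : ∀ s, τ₀ ≤ s → HasDerivAt (fun r => M ^ 2 * Real.exp r - α r * Real.exp r)
        (M ^ 2 * Real.exp s - u s ^ 2 * Real.exp s) s := by
      intro s hs
      exact ((Real.hasDerivAt_exp s).const_mul (M ^ 2)).sub (hg s hs)
    have hle : M ^ 2 * Real.exp τ₀ - α τ₀ * Real.exp τ₀ ≤ M ^ 2 * Real.exp t - α t * Real.exp t := by
      apply le_of_deriv_nonneg ht hcomp
      intro s hs
      have h1 : u s ^ 2 ≤ M ^ 2 := by
        have := hub s hs
        nlinarith [abs_nonneg (u s), le_abs_self (u s), neg_abs_le (u s)]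
      nlinarith [Real.exp_pos s]
    have h2 : 0 ≤ M ^ 2 * Real.exp τ₀ - α τ₀ * Real.exp τ₀ := by
      have := h0.2.1
      nlinarith [Real.exp_pos τ₀]
    have h3 : α t * Real.exp t ≤ M ^ 2 * Real.exp t := by linarith
    exact le_of_mul_le_mul_right h3 (Real.exp_pos t)
  intro τ hτ
  exact ⟨hα0 τ hτ, hαup τ hτ, hub τ hτ⟩
end

section
/- Let λ : ℝ → ℝ be continuous. Then every maximal solution of the reduced system α' = u², u' = −αu − λ(τ) is defined on the whole real line ℝ (no solution blows up in finite time). -/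
open Set
open scoped NNReal

section Auxiliary

lemma myfst {f : ℝ → ℝ × ℝ} {d : ℝ × ℝ} {s : Set ℝ} {t : ℝ}
    (h : HasDerivWithinAt f d s t) : HasDerivWithinAt (fun t => (f t).1) d.1 s t := by
  have h2 := h.hasFDerivWithinAt.fst
  rw [hasDerivWithinAt_iff_hasFDerivWithinAt]
  exact h2

lemma mysnd {f : ℝ → ℝ × ℝ} {d : ℝ × ℝ} {s : Set ℝ} {t : ℝ}
    (h : HasDerivWithinAt f d s t) : HasDerivWithinAt (fun t => (f t).2) d.2 s t := by
  have h2 := h.hasFDerivWithinAt.snd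
  rw [hasDerivWithinAt_iff_hasFDerivWithinAt]
  exact h2

lemma myfst' {f : ℝ → ℝ × ℝ} {d : ℝ × ℝ} {t : ℝ}
    (h : HasDerivAt f d t) : HasDerivAt (fun t => (f t).1) d.1 t := by
  have h2 := h.hasFDerivAt.fst
  rw [hasDerivAt_iff_hasFDerivAt]
  exact h2

lemma mysnd' {f : ℝ → ℝ × ℝ} {d : ℝ × ℝ} {t : ℝ}
    (h : HasDerivAt f d t) : HasDerivAt (fun t => (f t).2) d.2 t := by
  have h2 := h.hasFDerivAt.snd
  rw [hasDerivAt_iff_hasFDerivAt]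
  exact h2

lemma mylip {g : ℝ × ℝ → ℝ × ℝ} (hg : ContDiff ℝ 1 g) (z : ℝ × ℝ) (r : ℝ) :
    ∃ K : ℝ≥0, LipschitzOnWith K g (Metric.closedBall z r) := by
  obtain ⟨c, hc⟩ := (isCompact_closedBall z r).exists_bound_of_continuousOn
    ((hg.continuous_fderiv one_ne_zero).continuousOn)
  refine ⟨c.toNNReal, Convex.lipschitzOnWith_of_nnnorm_fderiv_le
    (fun x _ => (hg.differentiable one_ne_zero).differentiableAt) ?_ (convex_closedBall z r)⟩
  intro x hx
  have := hc x hx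
  rw [← norm_toNNReal]
  exact Real.toNNReal_mono (by simpa using this)

lemma gB_mono {δ K ε x y : ℝ} (hδ : 0 ≤ δ) (hK : 0 < K) (hε : 0 ≤ ε) (hx : 0 ≤ x) (h : x ≤ y) :
    gronwallBound δ K ε x ≤ gronwallBound δ K ε y := by
  simp only [gronwallBound_of_K_ne_0 hK.ne']
  have h1 : Real.exp (K * x) ≤ Real.exp (K * y) :=
    Real.exp_le_exp.2 (mul_le_mul_of_nonneg_left h hK.le)
  have h2 : (0:ℝ) < Real.exp (K * x) := Real.exp_pos _
  have h3 : 0 ≤ ε / K := div_nonneg hε hK.le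
  nlinarith

lemma energy_bound {g g' : ℝ → ℝ × ℝ} {c d M : ℝ}
    (hg : ∀ t ∈ Icc c d, HasDerivWithinAt g (g' t) (Icc c d) t)
    (hip : ∀ t ∈ Icc c d,
      |2 * ((g t).1 * (g' t).1 + (g t).2 * (g' t).2)|
        ≤ (M + 1) * ((g t).1 ^ 2 + (g t).2 ^ 2) + (M + 1)) :
    ∀ t ∈ Icc c d, (g t).1 ^ 2 + (g t).2 ^ 2
      ≤ gronwallBound ((g c).1 ^ 2 + (g c).2 ^ 2) (M + 1) (M + 1) (t - c) := by
  set E : ℝ → ℝ := fun t => (g t).1 ^ 2 + (g t).2 ^ 2 with hE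
  set D : ℝ → ℝ := fun t => 2 * ((g t).1 * (g' t).1 + (g t).2 * (g' t).2) with hD
  have hEd : ∀ t ∈ Icc c d, HasDerivWithinAt E (D t) (Icc c d) t := by
    intro t ht
    have h1 := (myfst (hg t ht)).pow 2
    have h2 := (mysnd (hg t ht)).pow 2
    have h3 : HasDerivWithinAt E (_ + _) (Icc c d) t := h1.add h2
    convert h3 using 1
    norm_num [hD] <;> ring
  have hcont : ContinuousOn E (Icc c d) := fun t ht => (hEd t ht).continuousWithinAt
  have key := norm_le_gronwallBound_of_norm_deriv_right_le (f := E) (f' := D)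
    (δ := E c) (K := M + 1) (ε := M + 1) (a := c) (b := d) hcont
    (fun t ht => (hEd t (Ico_subset_Icc_self ht)).mono_of_mem_nhdsWithin
      (Icc_mem_nhdsGE_of_mem ht))
    (by rw [Real.norm_eq_abs, abs_of_nonneg (by positivity)])
    (fun t ht => by
      rw [Real.norm_eq_abs, Real.norm_eq_abs, abs_of_nonneg (show 0 ≤ E t by positivity)]
      exact hip t (Ico_subset_Icc_self ht))
  intro t ht
  have := key t ht
  rwa [Real.norm_eq_abs, abs_of_nonneg (show 0 ≤ E t by positivity)] at this

lemma local_ex (l : ℝ → ℝ) (hl : Continuous l) (t₀ x₀ y₀ T : ℝ) (hT : 0 < T) :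
    ∃ f : ℝ → ℝ × ℝ, f t₀ = (x₀, y₀) ∧
      ∀ t ∈ Ioo (t₀ - T) (t₀ + T),
        HasDerivAt f ((f t).2 ^ 2, -((f t).1 * (f t).2) - l t) t := by
  obtain ⟨M₀, hM₀⟩ := (isCompact_Icc (a := t₀ - T) (b := t₀ + T)).exists_bound_of_continuousOn
    hl.continuousOn
  set M : ℝ := max M₀ 0 with hMdef
  have hM : 0 ≤ M := le_max_right _ _
  have hlM : ∀ t ∈ Icc (t₀ - T) (t₀ + T), |l t| ≤ M := fun t ht =>
    le_trans (by simpa using hM₀ t ht) (le_max_left _ _)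
  set E₀ : ℝ := x₀ ^ 2 + y₀ ^ 2 with hE₀def
  have hE₀ : 0 ≤ E₀ := by positivity
  set B : ℝ := gronwallBound E₀ (M + 1) (M + 1) T with hBdef
  set R : ℝ := Real.sqrt (max B 0) + 1 with hRdef
  have hR1 : (1:ℝ) ≤ R := le_add_of_nonneg_left (Real.sqrt_nonneg _)
  have hR0 : (0:ℝ) < R := lt_of_lt_of_le one_pos hR1
  have hBR : B ≤ R ^ 2 := by
    have h1 : Real.sqrt (max B 0) ^ 2 = max B 0 := Real.sq_sqrt (le_max_right _ _)
    nlinarith [Real.sqrt_nonneg (max B 0), le_max_left B 0]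
  set χ : ℝ × ℝ → ℝ :=
    fun p => Real.smoothTransition ((2 * R ^ 2 - (p.1 ^ 2 + p.2 ^ 2)) / R ^ 2) with hχdef
  set g : ℝ × ℝ → ℝ × ℝ := fun p => (χ p * p.2 ^ 2, -(χ p * (p.1 * p.2))) with hgdef
  set w : ℝ → ℝ × ℝ → ℝ × ℝ := fun t p => g p + (0, -l t) with hwdef
  have hw1 : ∀ t p, (w t p).1 = χ p * p.2 ^ 2 := by intro t p; simp [hwdef, hgdef]
  have hw2 : ∀ t p, (w t p).2 = -(χ p * (p.1 * p.2)) - l t := by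
    intro t p; simp [hwdef, hgdef, sub_eq_add_neg]
  have hχ1 : ∀ p : ℝ × ℝ, p.1 ^ 2 + p.2 ^ 2 ≤ R ^ 2 → χ p = 1 := by
    intro p hp
    exact Real.smoothTransition.one_of_one_le (by rw [le_div_iff₀ (by positivity)]; linarith)
  have hχ0 : ∀ p : ℝ × ℝ, 2 * R ^ 2 ≤ p.1 ^ 2 + p.2 ^ 2 → χ p = 0 := by
    intro p hp
    exact Real.smoothTransition.zero_of_nonpos
      (div_nonpos_of_nonpos_of_nonneg (by linarith) (by positivity))
  have hχnn : ∀ p : ℝ × ℝ, 0 ≤ χ p := fun p => Real.smoothTransition.nonneg _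
  have hχle : ∀ p : ℝ × ℝ, χ p ≤ 1 := fun p => Real.smoothTransition.le_one _
  -- global norm bound
  have hwb : ∀ t ∈ Icc (t₀ - T) (t₀ + T), ∀ p ∈ Metric.closedBall ((x₀, y₀) : ℝ × ℝ)
      ((2 * R ^ 2 + M) * T), ‖w t p‖ ≤ 2 * R ^ 2 + M := by
    intro t ht p _
    have hwp : w t p = (χ p * p.2 ^ 2, -(χ p * (p.1 * p.2)) - l t) :=
      Prod.ext (hw1 t p) (hw2 t p)
    rw [hwp, Prod.norm_def]
    have hlb := hlM t ht
    rcases le_or_gt (p.1 ^ 2 + p.2 ^ 2) (2 * R ^ 2) with hq | hq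
    · have h1 : |χ p * p.2 ^ 2| ≤ 2 * R ^ 2 := by
        rw [abs_of_nonneg (mul_nonneg (hχnn p) (sq_nonneg _))]
        nlinarith [hχnn p, hχle p, sq_nonneg p.1, sq_nonneg p.2]
      have h2 : |χ p * (p.1 * p.2)| ≤ 2 * R ^ 2 := by
        rw [abs_mul, abs_of_nonneg (hχnn p)]
        nlinarith [hχnn p, hχle p, abs_nonneg (p.1 * p.2), abs_mul p.1 p.2,
          sq_abs p.1, sq_abs p.2, sq_nonneg (|p.1| - |p.2|)]
      have h3 : |(-(χ p * (p.1 * p.2)) - l t)| ≤ |χ p * (p.1 * p.2)| + |l t| := by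
        calc |(-(χ p * (p.1 * p.2)) - l t)| ≤ |(-(χ p * (p.1 * p.2)))| + |l t| := abs_sub _ _
        _ = |χ p * (p.1 * p.2)| + |l t| := by rw [abs_neg]
      simp only [Real.norm_eq_abs]
      apply max_le (h1.trans (by linarith)) (by nlinarith)
    · have h0 : χ p = 0 := hχ0 p hq.le
      simp only [h0, zero_mul, neg_zero, zero_sub, Real.norm_eq_abs, abs_zero, abs_neg]
      apply max_le (by positivity) (by nlinarith [sq_nonneg R])
  -- smoothness and Lipschitz
  have hχc : ContDiff ℝ 1 χ := Real.smoothTransition.contDiff.comp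
    ((contDiff_const.sub ((contDiff_fst.pow 2).add (contDiff_snd.pow 2))).div_const _)
  have hgc : ContDiff ℝ 1 g := by
    apply ContDiff.prodMk
    · exact hχc.mul (contDiff_snd.pow 2)
    · exact (hχc.mul (contDiff_fst.mul contDiff_snd)).neg
  have hcontw : ∀ p : ℝ × ℝ, ContinuousOn (fun t => w t p) (Icc (t₀ - T) (t₀ + T)) := by
    intro p
    apply Continuous.continuousOn
    simp only [hwdef]
    fun_prop
  obtain ⟨K, hK⟩ := mylip hgc (x₀, y₀) ((2 * R ^ 2 + M) * T)
  have hlipw : ∀ t ∈ Icc (t₀ - T) (t₀ + T),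
      LipschitzOnWith K (w t) (Metric.closedBall (x₀, y₀) ((2 * R ^ 2 + M) * T)) := by
    intro t _ p hp q hq
    have : edist (w t p) (w t q) = edist (g p) (g q) := by
      simp only [hwdef]
      exact edist_add_right _ _ _
    rw [this]
    exact hK hp hq
  clear hwdef hgdef hχdef hRdef
  clear_value w g χ R B
  have hpl : IsPicardLindelof w (tmin := t₀ - T) (tmax := t₀ + T)
      ⟨t₀, by constructor <;> linarith⟩ (x₀, y₀)
      ((2 * R ^ 2 + M) * T).toNNReal 0 (2 * R ^ 2 + M).toNNReal K := by
    have hA : (((2 * R ^ 2 + M) * T).toNNReal : ℝ) = (2 * R ^ 2 + M) * T :=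
      Real.coe_toNNReal _ (by positivity)
    have hL : ((2 * R ^ 2 + M).toNNReal : ℝ) = 2 * R ^ 2 + M :=
      Real.coe_toNNReal _ (by positivity)
    refine ⟨?_, ?_, ?_, ?_⟩
    · rw [hA]; exact hlipw
    · rw [hA]; exact fun p _ => hcontw p
    · rw [hA, hL]; exact hwb
    · simp only [hA, hL, NNReal.coe_zero, sub_zero]
      rw [add_sub_cancel_left, sub_sub_cancel, max_self]
  obtain ⟨f, hf0, hfd⟩ : ∃ f : ℝ → ℝ × ℝ, f t₀ = (x₀, y₀) ∧ ∀ t ∈ Icc (t₀ - T) (t₀ + T),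
      HasDerivWithinAt f (w t (f t)) (Icc (t₀ - T) (t₀ + T)) t :=
    hpl.exists_eq_forall_mem_Icc_hasDerivWithinAt₀
  -- energy bound
  have hEf0 : (f t₀).1 ^ 2 + (f t₀).2 ^ 2 = E₀ := by rw [hf0]
  have hipgen : ∀ t ∈ Icc (t₀ - T) (t₀ + T),
      |2 * ((f t).1 * (w t (f t)).1 + (f t).2 * (w t (f t)).2)|
        ≤ (M + 1) * ((f t).1 ^ 2 + (f t).2 ^ 2) + (M + 1) := by
    intro t ht
    have : (f t).1 * (w t (f t)).1 + (f t).2 * (w t (f t)).2 = -((f t).2 * l t) := by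
      rw [hw1, hw2]; ring
    rw [this]
    have hlb := hlM t ht
    have h1 : |2 * -((f t).2 * l t)| = 2 * |(f t).2| * |l t| := by
      rw [abs_mul, abs_neg, abs_mul, abs_two]; ring
    rw [h1]
    nlinarith [abs_nonneg (f t).2, abs_nonneg (l t), sq_abs (f t).2,
      sq_nonneg (|(f t).2| - 1), sq_nonneg (f t).1]
  have hEb : ∀ t ∈ Icc (t₀ - T) (t₀ + T), (f t).1 ^ 2 + (f t).2 ^ 2 ≤ B := by
    intro t ht
    rcases le_or_gt t₀ t with h | h
    · have hfor := energy_bound (g := f) (g' := fun t => w t (f t)) (c := t₀) (d := t₀ + T)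
        (M := M)
        (fun s hs => (hfd s ⟨by linarith [hs.1], hs.2⟩).mono
          (Icc_subset_Icc (by linarith) le_rfl))
        (fun s hs => hipgen s ⟨by linarith [hs.1], hs.2⟩)
      have := hfor t ⟨h, ht.2⟩
      rw [hEf0] at this
      rw [hBdef]
      exact this.trans (gB_mono hE₀ (by linarith) (by linarith) (by linarith) (by linarith [ht.2]))
    · -- backward: reflect
      set fb : ℝ → ℝ × ℝ := fun s => f (t₀ - s) with hfbdef
      have hmap : ∀ s ∈ Icc (0:ℝ) T, t₀ - s ∈ Icc (t₀ - T) (t₀ + T) := by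
        intro s hs; constructor <;> [linarith [hs.2]; linarith [hs.1]]
      have hfbd : ∀ s ∈ Icc (0:ℝ) T,
          HasDerivWithinAt fb (-(w (t₀ - s) (f (t₀ - s)))) (Icc 0 T) s := by
        intro s hs
        have hi : HasDerivWithinAt (fun s : ℝ => t₀ - s) (-1) (Icc (0:ℝ) T) s := by
          exact ((hasDerivAt_id s).const_sub t₀).hasDerivWithinAt
        have hcomp := (hfd (t₀ - s) (hmap s hs)).scomp s hi
          (fun x hx => hmap x hx)
        rw [neg_one_smul] at hcomp; exact hcomp
      have hipb : ∀ s ∈ Icc (0:ℝ) T,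
          |2 * ((fb s).1 * (-(w (t₀ - s) (f (t₀ - s)))).1
            + (fb s).2 * (-(w (t₀ - s) (f (t₀ - s)))).2)|
          ≤ (M + 1) * ((fb s).1 ^ 2 + (fb s).2 ^ 2) + (M + 1) := by
        intro s hs
        have h2 := hipgen (t₀ - s) (hmap s hs)
        have hrw : (2 : ℝ) * ((fb s).1 * (-(w (t₀ - s) (f (t₀ - s)))).1
            + (fb s).2 * (-(w (t₀ - s) (f (t₀ - s)))).2)
            = -(2 * ((f (t₀ - s)).1 * (w (t₀ - s) (f (t₀ - s))).1
              + (f (t₀ - s)).2 * (w (t₀ - s) (f (t₀ - s))).2)) := by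
          simp only [Prod.fst_neg, Prod.snd_neg, hfbdef]; ring
        rw [hrw, abs_neg]
        simpa [hfbdef] using h2
      have hback := energy_bound (g := fb) (g' := fun s => -(w (t₀ - s) (f (t₀ - s))))
        (c := 0) (d := T) (M := M) hfbd hipb
      have hfb0 : (fb 0).1 ^ 2 + (fb 0).2 ^ 2 = E₀ := by
        simp only [hfbdef, sub_zero]; rw [hf0]
      have hs : t₀ - t ∈ Icc (0:ℝ) T := ⟨by linarith, by linarith [ht.1]⟩
      have h2 := hback (t₀ - t) hs
      rw [hfb0] at h2
      have h3 : (fb (t₀ - t)).1 ^ 2 + (fb (t₀ - t)).2 ^ 2 = (f t).1 ^ 2 + (f t).2 ^ 2 := by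
        simp only [hfbdef, sub_sub_cancel]
      rw [h3] at h2
      rw [hBdef]
      exact h2.trans (gB_mono hE₀ (by linarith) (by linarith) (by linarith)
        (by linarith [ht.1]))
  -- on the ball where χ = 1, w is the true vector field
  have hweq : ∀ t ∈ Icc (t₀ - T) (t₀ + T),
      w t (f t) = ((f t).2 ^ 2, -((f t).1 * (f t).2) - l t) := by
    intro t ht
    have h1 : χ (f t) = 1 := hχ1 (f t) ((hEb t ht).trans hBR)
    exact Prod.ext (by rw [hw1, h1, one_mul]) (by rw [hw2, h1, one_mul])
  refine ⟨f, hf0, fun t ht => ?_⟩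
  have h1 := (hfd t (Ioo_subset_Icc_self ht)).hasDerivAt (Icc_mem_nhds ht.1 ht.2)
  rwa [hweq t (Ioo_subset_Icc_self ht)] at h1

lemma uniq (l : ℝ → ℝ) {f g : ℝ → ℝ × ℝ} {c d t₁ : ℝ} (ht₁ : t₁ ∈ Ioo c d)
    (hf : ∀ t ∈ Ioo c d, HasDerivAt f ((f t).2 ^ 2, -((f t).1 * (f t).2) - l t) t)
    (hg : ∀ t ∈ Ioo c d, HasDerivAt g ((g t).2 ^ 2, -((g t).1 * (g t).2) - l t) t)
    (heq : f t₁ = g t₁) : EqOn f g (Ioo c d) := by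
  intro τ hτ
  obtain ⟨c', hc'⟩ := exists_between (show c < min τ t₁ from lt_min hτ.1 ht₁.1)
  obtain ⟨d', hd'⟩ := exists_between (show max τ t₁ < d from max_lt hτ.2 ht₁.2)
  have hsub : Icc c' d' ⊆ Ioo c d := fun x hx =>
    ⟨lt_of_lt_of_le hc'.1 hx.1, lt_of_le_of_lt hx.2 hd'.2⟩
  have hsub' : Ioo c' d' ⊆ Ioo c d := Ioo_subset_Icc_self.trans hsub
  have hcf : ContinuousOn f (Icc c' d') := fun x hx =>
    ((hf x (hsub hx)).continuousAt).continuousWithinAt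
  have hcg : ContinuousOn g (Icc c' d') := fun x hx =>
    ((hg x (hsub hx)).continuousAt).continuousWithinAt
  obtain ⟨ρ₁, hρ₁⟩ := isCompact_Icc.exists_bound_of_continuousOn hcf
  obtain ⟨ρ₂, hρ₂⟩ := isCompact_Icc.exists_bound_of_continuousOn hcg
  set ρ : ℝ := max ρ₁ ρ₂ with hρdef
  have hg0 : ContDiff ℝ 1 (fun p : ℝ × ℝ => ((p.2 ^ 2, -(p.1 * p.2)) : ℝ × ℝ)) :=
    (contDiff_snd.pow 2).prodMk (contDiff_fst.mul contDiff_snd).neg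
  obtain ⟨K, hK⟩ := mylip hg0 0 ρ
  have hv : ∀ t, LipschitzOnWith K
      (fun p : ℝ × ℝ => ((p.2 ^ 2, -(p.1 * p.2) - l t) : ℝ × ℝ)) (Metric.closedBall 0 ρ) := by
    intro t p hp q hq
    have h1 : ∀ r : ℝ × ℝ, ((r.2 ^ 2, -(r.1 * r.2) - l t) : ℝ × ℝ)
        = (r.2 ^ 2, -(r.1 * r.2)) + (0, -l t) := by
      intro r; ext <;> simp [sub_eq_add_neg]
    show edist ((p.2 ^ 2, -(p.1 * p.2) - l t) : ℝ × ℝ)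
      ((q.2 ^ 2, -(q.1 * q.2) - l t) : ℝ × ℝ) ≤ K * edist p q
    rw [h1 p, h1 q, edist_add_right]
    exact hK hp hq
  have := ODE_solution_unique_of_mem_Ioo (v := fun t (p : ℝ × ℝ) => (p.2 ^ 2, -(p.1 * p.2) - l t))
    (s := fun _ => Metric.closedBall (0 : ℝ × ℝ) ρ) (fun t _ => hv t)
    (t₀ := t₁) (a := c') (b := d')
    ⟨lt_of_lt_of_le hc'.2 (min_le_right _ _), lt_of_le_of_lt (le_max_right τ t₁) hd'.1⟩
    (fun t ht => ⟨hf t (hsub' ht), by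
      rw [mem_closedBall_zero_iff]
      exact (hρ₁ t (Ioo_subset_Icc_self ht)).trans (le_max_left _ _)⟩)
    (fun t ht => ⟨hg t (hsub' ht), by
      rw [mem_closedBall_zero_iff]
      exact (hρ₂ t (Ioo_subset_Icc_self ht)).trans (le_max_right _ _)⟩)
    heq
  exact this ⟨lt_of_lt_of_le hc'.2 (min_le_left _ _), lt_of_le_of_lt (le_max_left τ t₁) hd'.1⟩

end Auxiliary

/-- No solution of the reduced system `α' = u²`, `u' = -αu - λ(τ)` (with `λ` continuous)
blows up in finite time: every solution defined on an open interval extends to a solution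
defined on the whole real line, i.e. all maximal solutions are defined on all of `ℝ`. -/
theorem solutions_globally_defined
    (l : ℝ → ℝ) (hl : Continuous l)
    (a b : ℝ) (hab : a < b) (α u : ℝ → ℝ)
    (hα : ∀ τ ∈ Set.Ioo a b, HasDerivAt α (u τ ^ 2) τ)
    (hu : ∀ τ ∈ Set.Ioo a b, HasDerivAt u (-(α τ * u τ) - l τ) τ) :
    ∃ A U : ℝ → ℝ,
      (∀ τ : ℝ, HasDerivAt A (U τ ^ 2) τ) ∧
      (∀ τ : ℝ, HasDerivAt U (-(A τ * U τ) - l τ) τ) ∧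
      (∀ τ ∈ Set.Ioo a b, A τ = α τ ∧ U τ = u τ) := by
  set t₀ : ℝ := (a + b) / 2 with ht₀def
  have ht₀ : t₀ ∈ Ioo a b := ⟨by simp only [ht₀def]; linarith, by simp only [ht₀def]; linarith⟩
  have hex : ∀ n : ℕ, ∃ f : ℝ → ℝ × ℝ, f t₀ = (α t₀, u t₀) ∧
      ∀ t ∈ Ioo (t₀ - (n + 1 : ℝ)) (t₀ + (n + 1 : ℝ)),
        HasDerivAt f ((f t).2 ^ 2, -((f t).1 * (f t).2) - l t) t :=
    fun n => local_ex l hl t₀ (α t₀) (u t₀) (n + 1) (by positivity)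
  choose F hF0 hFd using hex
  have hmem : ∀ (n : ℕ) (t : ℝ), |t - t₀| < n + 1 →
      t ∈ Ioo (t₀ - (n + 1 : ℝ)) (t₀ + (n + 1 : ℝ)) := by
    intro n t h
    have := abs_lt.1 h
    exact ⟨by linarith [this.1], by linarith [this.2]⟩
  have hcons : ∀ (m n : ℕ) (t : ℝ), |t - t₀| < m + 1 → |t - t₀| < n + 1 → F m t = F n t := by
    intro m n t hm hn
    set k : ℝ := min (m + 1 : ℝ) (n + 1 : ℝ) with hkdef
    have hk0 : 0 < k := lt_min (by positivity) (by positivity)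
    have hsubm : Ioo (t₀ - k) (t₀ + k) ⊆ Ioo (t₀ - (m + 1 : ℝ)) (t₀ + (m + 1 : ℝ)) :=
      Ioo_subset_Ioo (by linarith [min_le_left (m + 1 : ℝ) (n + 1 : ℝ)])
        (by linarith [min_le_left (m + 1 : ℝ) (n + 1 : ℝ)])
    have hsubn : Ioo (t₀ - k) (t₀ + k) ⊆ Ioo (t₀ - (n + 1 : ℝ)) (t₀ + (n + 1 : ℝ)) :=
      Ioo_subset_Ioo (by linarith [min_le_right (m + 1 : ℝ) (n + 1 : ℝ)])
        (by linarith [min_le_right (m + 1 : ℝ) (n + 1 : ℝ)])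
    have := uniq l (f := F m) (g := F n) (c := t₀ - k) (d := t₀ + k) (t₁ := t₀)
      ⟨by linarith, by linarith⟩
      (fun s hs => hFd m s (hsubm hs)) (fun s hs => hFd n s (hsubn hs))
      ((hF0 m).trans (hF0 n).symm)
    have habs := abs_lt.1 (lt_min hm hn)
    exact this ⟨by linarith [habs.1], by linarith [habs.2]⟩
  set G : ℝ → ℝ × ℝ := fun t => F ⌈|t - t₀|⌉₊ t with hGdef
  have hGF : ∀ (n : ℕ) (t : ℝ), |t - t₀| < n + 1 → G t = F n t := by
    intro n t h
    exact hcons _ n t (lt_of_le_of_lt (Nat.le_ceil _) (by exact_mod_cast lt_add_one _)) h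
  have hG0 : G t₀ = (α t₀, u t₀) := by
    rw [hGF 0 t₀ (by simp), hF0]
  have hGd : ∀ τ : ℝ, HasDerivAt G ((G τ).2 ^ 2, -((G τ).1 * (G τ).2) - l τ) τ := by
    intro τ
    set n : ℕ := ⌈|τ - t₀|⌉₊ + 1 with hndef
    have hτn : |τ - t₀| < n := by
      refine lt_of_le_of_lt (Nat.le_ceil _) ?_
      rw [hndef]; push_cast; linarith
    have hopen : IsOpen {t : ℝ | |t - t₀| < (n : ℝ)} :=
      isOpen_lt (by fun_prop) continuous_const
    have hev : G =ᶠ[nhds τ] F n := by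
      filter_upwards [hopen.mem_nhds hτn] with t ht
      exact hGF n t (lt_of_lt_of_le ht (by push_cast; linarith))
    have hd := hFd n τ (hmem n τ (by push_cast; push_cast at hτn; linarith))
    have h2 := hd.congr_of_eventuallyEq hev
    rw [hGF n τ (by push_cast; push_cast at hτn; linarith)]
    exact h2
  refine ⟨fun t => (G t).1, fun t => (G t).2, fun τ => myfst' (hGd τ),
    fun τ => mysnd' (hGd τ), ?_⟩
  have hcurve : ∀ t ∈ Ioo a b, HasDerivAt (fun t => ((α t, u t) : ℝ × ℝ))
      ((((α t, u t) : ℝ × ℝ).2) ^ 2,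
        -((((α t, u t) : ℝ × ℝ).1) * (((α t, u t) : ℝ × ℝ).2)) - l t) t :=
    fun t ht => (hα t ht).prodMk (hu t ht)
  have heq : EqOn (fun t => ((α t, u t) : ℝ × ℝ)) G (Ioo a b) :=
    uniq l ht₀ hcurve (fun t _ => hGd t) hG0.symm
  intro τ hτ
  have h := heq hτ
  have h1 : (α τ, u τ) = G τ := h
  exact ⟨by show (G τ).1 = α τ; rw [← h1], by show (G τ).2 = u τ; rw [← h1]⟩
end

section
/- Let λ : ℝ → ℝ be continuous and let (α, u) be a solution of the reduced system α' = u², u' = −αu − λ(τ) on [0, τ]. Set V(s) = (u(s)² + α(s)²)/2. Then |√(V(τ)) − √(V(0))| ≤ (1/√2)·∫₀^τ |λ(s)| ds. -/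
open Real MeasureTheory Set intervalIntegral

private lemma sqrt_add_le' (x ε : ℝ) (hx : 0 ≤ x) (hε : 0 ≤ ε) :
    Real.sqrt (x + ε) ≤ Real.sqrt x + Real.sqrt ε := by
  have h1 : x + ε ≤ (Real.sqrt x + Real.sqrt ε) ^ 2 := by
    nlinarith [Real.sq_sqrt hx, Real.sq_sqrt hε, Real.sqrt_nonneg x, Real.sqrt_nonneg ε]
  have h2 := Real.sqrt_le_sqrt h1
  rwa [Real.sqrt_sq (by positivity)] at h2

/-- The a priori estimate for the reduced system `α' = u²`, `u' = -αu - λ(τ)`: with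
`V(s) = (u(s)² + α(s)²)/2` one has `|√V(τ) - √V(0)| ≤ (1/√2)·∫₀^τ |λ(s)| ds`. -/
theorem sqrt_energy_estimate
    (l : ℝ → ℝ) (hl : Continuous l)
    (τ : ℝ) (hτ : 0 ≤ τ) (α u : ℝ → ℝ)
    (hα : ∀ s ∈ Set.Icc (0 : ℝ) τ, HasDerivAt α (u s ^ 2) s)
    (hu : ∀ s ∈ Set.Icc (0 : ℝ) τ, HasDerivAt u (-(α s * u s) - l s) s) :
    |Real.sqrt ((u τ ^ 2 + α τ ^ 2) / 2) - Real.sqrt ((u 0 ^ 2 + α 0 ^ 2) / 2)| ≤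
      (1 / Real.sqrt 2) * ∫ s in (0 : ℝ)..τ, |l s| := by
  set V : ℝ → ℝ := fun s => (u s ^ 2 + α s ^ 2) / 2 with hVdef
  have hVnonneg : ∀ s, 0 ≤ V s := fun s => by positivity
  have hVderiv : ∀ s ∈ Icc (0 : ℝ) τ, HasDerivAt V (-(u s * l s)) s := by
    intro s hs
    have h1 := (((hu s hs).pow 2).add ((hα s hs).pow 2)).div_const 2
    refine h1.congr_deriv ?_
    push_cast
    ring
  have hucont : ContinuousOn u (Icc 0 τ) := fun s hs =>
    (hu s hs).continuousAt.continuousWithinAt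
  have hVcont : ContinuousOn V (Icc 0 τ) := fun s hs =>
    (hVderiv s hs).continuousAt.continuousWithinAt
  have key : ∀ ε : ℝ, 0 < ε →
      |Real.sqrt (V τ + ε) - Real.sqrt (V 0 + ε)| ≤
        (1 / Real.sqrt 2) * ∫ s in (0 : ℝ)..τ, |l s| := by
    intro ε hε
    have hpos : ∀ s, 0 < V s + ε := fun s => by have := hVnonneg s; linarith
    set D : ℝ → ℝ := fun s => (-(u s * l s)) / (2 * Real.sqrt (V s + ε)) with hD
    have hWderiv : ∀ s ∈ Icc (0 : ℝ) τ,
        HasDerivAt (fun t => Real.sqrt (V t + ε)) (D s) s := by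
      intro s hs
      have h := (Real.hasDerivAt_sqrt (ne_of_gt (hpos s))).comp s
        ((hVderiv s hs).add_const ε)
      refine h.congr_deriv ?_
      simp only [hD]
      ring
    have hsqrtpos : ∀ s, 0 < Real.sqrt (V s + ε) := fun s => Real.sqrt_pos.2 (hpos s)
    have hDcont : ContinuousOn D (Icc 0 τ) := by
      apply ContinuousOn.div
      · exact (hucont.mul hl.continuousOn).neg
      · exact continuousOn_const.mul ((hVcont.add continuousOn_const).sqrt)
      · intro s hs
        have := hsqrtpos s
        positivity
    have hint : IntervalIntegrable D volume 0 τ := by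
      apply ContinuousOn.intervalIntegrable
      rwa [uIcc_of_le hτ]
    have hftc : ∫ s in (0 : ℝ)..τ, D s = Real.sqrt (V τ + ε) - Real.sqrt (V 0 + ε) := by
      apply intervalIntegral.integral_eq_sub_of_hasDerivAt
      · intro x hx
        rw [uIcc_of_le hτ] at hx
        exact hWderiv x hx
      · exact hint
    have hbound : ∀ s ∈ Icc (0 : ℝ) τ, |D s| ≤ (1 / Real.sqrt 2) * |l s| := by
      intro s hs
      have husq : u s ^ 2 ≤ 2 * (V s + ε) := by
        have := hVnonneg s
        simp only [hVdef]
        nlinarith [sq_nonneg (α s)]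
      have hus : |u s| ≤ Real.sqrt 2 * Real.sqrt (V s + ε) := by
        rw [← Real.sqrt_sq_eq_abs, ← Real.sqrt_mul (by norm_num : (0:ℝ) ≤ 2)]
        exact Real.sqrt_le_sqrt husq
      calc |D s| = |u s| * |l s| / (2 * Real.sqrt (V s + ε)) := by
            rw [hD, abs_div, abs_neg, abs_mul]
            congr 1
            rw [abs_of_pos (by have := hsqrtpos s; linarith)]
        _ ≤ (Real.sqrt 2 * Real.sqrt (V s + ε)) * |l s| / (2 * Real.sqrt (V s + ε)) := by
            apply div_le_div_of_nonneg_right _ (by have := hsqrtpos s; linarith)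
            exact mul_le_mul_of_nonneg_right hus (abs_nonneg _)
        _ = (1 / Real.sqrt 2) * |l s| := by
            have hs2 : Real.sqrt 2 > 0 := by positivity
            have hse : Real.sqrt (V s + ε) > 0 := hsqrtpos s
            have h2 : Real.sqrt 2 * Real.sqrt 2 = 2 := Real.mul_self_sqrt (by norm_num)
            field_simp
            linear_combination |l s| * h2
    calc |Real.sqrt (V τ + ε) - Real.sqrt (V 0 + ε)| = |∫ s in (0 : ℝ)..τ, D s| := by
          rw [hftc]
      _ ≤ ∫ s in (0 : ℝ)..τ, |D s| := intervalIntegral.abs_integral_le_integral_abs hτ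
      _ ≤ ∫ s in (0 : ℝ)..τ, (1 / Real.sqrt 2) * |l s| := by
          apply intervalIntegral.integral_mono_on hτ hint.abs
          · exact (continuous_const.mul hl.abs).intervalIntegrable 0 τ
          · exact hbound
      _ = (1 / Real.sqrt 2) * ∫ s in (0 : ℝ)..τ, |l s| := intervalIntegral.integral_const_mul _ _
  -- pass to the limit ε → 0
  have hgoal : |Real.sqrt (V τ) - Real.sqrt (V 0)| ≤
      (1 / Real.sqrt 2) * ∫ s in (0 : ℝ)..τ, |l s| := by
    apply le_of_forall_pos_le_add
    intro δ hδ
    set ε : ℝ := (δ / 2) ^ 2 with hεdef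
    have hεpos : 0 < ε := by positivity
    have hclose : ∀ x : ℝ, 0 ≤ x → |Real.sqrt (x + ε) - Real.sqrt x| ≤ δ / 2 := by
      intro x hx
      rw [abs_of_nonneg (by
        linarith [Real.sqrt_le_sqrt (show x ≤ x + ε by linarith)])]
      have h1 := sqrt_add_le' x ε hx hεpos.le
      have h2 : Real.sqrt ε = δ / 2 := by
        rw [hεdef, Real.sqrt_sq (by linarith)]
      linarith
    have h1 := hclose (V τ) (hVnonneg τ)
    have h2 := hclose (V 0) (hVnonneg 0)
    have h3 := key ε hεpos
    calc |Real.sqrt (V τ) - Real.sqrt (V 0)|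
        ≤ |Real.sqrt (V τ) - Real.sqrt (V τ + ε)| + |Real.sqrt (V τ + ε) - Real.sqrt (V 0 + ε)|
          + |Real.sqrt (V 0 + ε) - Real.sqrt (V 0)| := by
            calc |Real.sqrt (V τ) - Real.sqrt (V 0)|
                ≤ |Real.sqrt (V τ) - Real.sqrt (V 0 + ε)|
                  + |Real.sqrt (V 0 + ε) - Real.sqrt (V 0)| := abs_sub_le _ _ _
              _ ≤ (|Real.sqrt (V τ) - Real.sqrt (V τ + ε)|
                  + |Real.sqrt (V τ + ε) - Real.sqrt (V 0 + ε)|)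
                  + |Real.sqrt (V 0 + ε) - Real.sqrt (V 0)| :=
                add_le_add_left (abs_sub_le _ _ _) _
      _ ≤ δ / 2 + ((1 / Real.sqrt 2) * ∫ s in (0 : ℝ)..τ, |l s|) + δ / 2 := by
          rw [abs_sub_comm (Real.sqrt (V τ))]
          exact add_le_add (add_le_add h1 h3) h2
      _ = (1 / Real.sqrt 2) * (∫ s in (0 : ℝ)..τ, |l s|) + δ := by ring
  exact hgoal
end

section
/- Let α : [0, ∞) → ℝ be continuous with α(τ) → +∞ as τ → +∞, and define f(p) = exp( ∫₀^p α(s) ds ). Then the ratio ( ∫₀^τ f(p) dp ) / f(τ) tends to zero as τ → +∞. -/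
open Filter

lemma aux_ratio (β : ℝ → ℝ) (hβ : Continuous β) (hlim : Tendsto β atTop atTop) :
    Tendsto
      (fun τ : ℝ =>
        (∫ p in (0 : ℝ)..τ, Real.exp (∫ s in (0 : ℝ)..p, β s)) /
          Real.exp (∫ s in (0 : ℝ)..τ, β s))
      atTop (nhds 0) := by
  set F : ℝ → ℝ := fun τ => ∫ s in (0:ℝ)..τ, β s with hF
  have hFc : Continuous F := intervalIntegral.continuous_primitive (fun a b => hβ.intervalIntegrable a b) 0
  set f : ℝ → ℝ := fun p => Real.exp (F p) with hf
  have hfc : Continuous f := Real.continuous_exp.comp hFc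
  have hfpos : ∀ p, 0 < f p := fun p => Real.exp_pos _
  rw [NormedAddCommGroup.tendsto_nhds_zero]
  intro ε hε
  set M : ℝ := 2 / ε with hM
  have hMpos : 0 < M := by positivity
  obtain ⟨T₀, hT₀⟩ := (hlim.eventually_ge_atTop M).exists_forall_of_atTop
  set T : ℝ := max T₀ 0 with hT
  have hTnn : (0:ℝ) ≤ T := le_max_right _ _
  have hMβ : ∀ s, T ≤ s → M ≤ β s := fun s hs => hT₀ s (le_trans (le_max_left _ _) hs)
  -- key estimate: for T ≤ p ≤ τ, f p ≤ f τ * exp (M * (p - τ))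
  have key : ∀ p τ : ℝ, T ≤ p → p ≤ τ → f p ≤ f τ * Real.exp (M * (p - τ)) := by
    intro p τ hp hpτ
    have hsplit : F p + ∫ s in p..τ, β s = F τ :=
      intervalIntegral.integral_add_adjacent_intervals (hβ.intervalIntegrable 0 p)
        (hβ.intervalIntegrable p τ)
    have hlow : M * (τ - p) ≤ ∫ s in p..τ, β s := by
      have := intervalIntegral.integral_mono_on hpτ (_root_.intervalIntegrable_const (μ := MeasureTheory.volume) (c := M))
        (hβ.intervalIntegrable p τ) (fun s hs => hMβ s (le_trans hp hs.1))
      rw [intervalIntegral.integral_const, smul_eq_mul] at this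
      linarith
    have : F p ≤ F τ + M * (p - τ) := by nlinarith
    calc f p = Real.exp (F p) := rfl
      _ ≤ Real.exp (F τ + M * (p - τ)) := Real.exp_le_exp.mpr this
      _ = f τ * Real.exp (M * (p - τ)) := by rw [Real.exp_add]
  set C : ℝ := ∫ p in (0:ℝ)..T, f p with hC
  have hCnn : 0 ≤ C := intervalIntegral.integral_nonneg hTnn (fun p _ => (hfpos p).le)
  -- the transient term tends to 0
  have htrans : Tendsto (fun τ => (C / f T) * Real.exp (M * (T - τ))) atTop (nhds 0) := by
    have h1 : Tendsto (fun τ : ℝ => M * (T - τ)) atTop atBot := by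
      apply Tendsto.const_mul_atBot hMpos
      have := Filter.tendsto_atBot_add_const_left atTop T tendsto_neg_atTop_atBot
      exact this.congr (fun x => by simp [sub_eq_add_neg])
    have := (Real.tendsto_exp_atBot.comp h1).const_mul (C / f T)
    simpa using this
  have hev : ∀ᶠ τ : ℝ in atTop, (C / f T) * Real.exp (M * (T - τ)) < ε / 2 :=
    htrans.eventually (eventually_lt_nhds (by positivity : (0:ℝ) < ε / 2))
  have hMinv : 1 / M = ε / 2 := by rw [hM, one_div_div]
  filter_upwards [hev, eventually_ge_atTop T] with τ hτ1 hτ2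
  have hτ0 : (0:ℝ) ≤ τ := le_trans hTnn hτ2
  set J : ℝ := ∫ p in T..τ, f p with hJdef
  have hIsplit : (∫ p in (0:ℝ)..τ, f p) = C + J :=
    (intervalIntegral.integral_add_adjacent_intervals (hfc.intervalIntegrable 0 T)
      (hfc.intervalIntegrable T τ)).symm
  -- compute the exponential integral
  have hGc : Continuous (fun p : ℝ => Real.exp (M * (p - τ))) := by continuity
  have hG : ∀ x ∈ Set.uIcc T τ, HasDerivAt (fun p => Real.exp (M * (p - τ)) / M)
      (Real.exp (M * (x - τ))) x := by
    intro x _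
    have h1 : HasDerivAt (fun p : ℝ => M * (p - τ)) M x := by
      simpa using ((hasDerivAt_id x).sub_const τ).const_mul M
    have h3 := h1.exp.div_const M
    simpa [mul_comm, mul_div_assoc, mul_div_cancel_left₀ _ (ne_of_gt hMpos)] using h3
  have hE : (∫ p in T..τ, Real.exp (M * (p - τ))) =
      Real.exp (M * (τ - τ)) / M - Real.exp (M * (T - τ)) / M :=
    intervalIntegral.integral_eq_sub_of_hasDerivAt hG (hGc.intervalIntegrable T τ)
  have hE' : (∫ p in T..τ, Real.exp (M * (p - τ))) ≤ 1 / M := by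
    rw [hE]
    have : 0 < Real.exp (M * (T - τ)) := Real.exp_pos _
    simp only [sub_self, mul_zero, Real.exp_zero]
    have hMi : 0 < 1 / M := by positivity
    nlinarith [div_pos this hMpos]
  -- bound J
  have hJ : J ≤ f τ * (1 / M) := by
    have h1 : J ≤ ∫ p in T..τ, f τ * Real.exp (M * (p - τ)) := by
      apply intervalIntegral.integral_mono_on hτ2 (hfc.intervalIntegrable T τ)
        ((continuous_const.mul hGc).intervalIntegrable T τ)
      exact fun p hp => key p τ hp.1 hp.2
    rw [intervalIntegral.integral_const_mul] at h1
    calc J ≤ f τ * ∫ p in T..τ, Real.exp (M * (p - τ)) := h1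
      _ ≤ f τ * (1 / M) := mul_le_mul_of_nonneg_left hE' (hfpos τ).le
  have hJnn : 0 ≤ J := intervalIntegral.integral_nonneg hτ2 (fun p _ => (hfpos p).le)
  have hJdiv : J / f τ ≤ ε / 2 := by
    rw [← hMinv, div_le_iff₀ (hfpos τ)]
    calc J ≤ f τ * (1 / M) := hJ
      _ = 1 / M * f τ := mul_comm _ _
  have hfT : f T ≤ f τ * Real.exp (M * (T - τ)) := key T τ le_rfl hτ2
  have hCdiv : C / f τ ≤ C / f T * Real.exp (M * (T - τ)) := by
    rw [div_mul_eq_mul_div, div_le_div_iff₀ (hfpos τ) (hfpos T)]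
    nlinarith [mul_le_mul_of_nonneg_left hfT hCnn]
  have hInn : 0 ≤ (∫ p in (0:ℝ)..τ, f p) :=
    intervalIntegral.integral_nonneg hτ0 (fun p _ => (hfpos p).le)
  have hfinal : (∫ p in (0:ℝ)..τ, f p) / f τ < ε := by
    rw [hIsplit, add_div]
    have := hCdiv.trans_lt hτ1
    linarith
  calc ‖(∫ p in (0:ℝ)..τ, f p) / f τ‖ = (∫ p in (0:ℝ)..τ, f p) / f τ :=
        Real.norm_of_nonneg (div_nonneg hInn (hfpos τ).le)
    _ < ε := hfinal


/-- Lemma 2: if `α` is continuous on `[0, ∞)` with `α(τ) → +∞` as `τ → +∞`, and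
`f(p) = exp(∫₀^p α(s) ds)`, then `(∫₀^τ f(p) dp) / f(τ) → 0` as `τ → +∞`. -/
theorem integral_exp_ratio_tendsto_zero
    (α : ℝ → ℝ) (hα : ContinuousOn α (Set.Ici 0))
    (hlim : Tendsto α atTop atTop) :
    Tendsto
      (fun τ : ℝ =>
        (∫ p in (0 : ℝ)..τ, Real.exp (∫ s in (0 : ℝ)..p, α s)) /
          Real.exp (∫ s in (0 : ℝ)..τ, α s))
      atTop (nhds 0) := by
  set β : ℝ → ℝ := fun s => α (max s 0) with hβ
  have hβc : Continuous β :=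
    hα.comp_continuous (continuous_id.max continuous_const) (fun x => le_max_right x 0)
  have hβlim : Tendsto β atTop atTop :=
    hlim.comp (tendsto_atTop_mono (fun x => le_max_left x 0) tendsto_id)
  have hin : ∀ p : ℝ, 0 ≤ p → (∫ s in (0:ℝ)..p, β s) = ∫ s in (0:ℝ)..p, α s := by
    intro p hp
    apply intervalIntegral.integral_congr
    intro s hs
    rw [Set.uIcc_of_le hp] at hs
    simp [hβ, max_eq_left hs.1]
  have heq : (fun τ : ℝ =>
        (∫ p in (0 : ℝ)..τ, Real.exp (∫ s in (0 : ℝ)..p, β s)) /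
          Real.exp (∫ s in (0 : ℝ)..τ, β s)) =ᶠ[atTop]
      (fun τ : ℝ =>
        (∫ p in (0 : ℝ)..τ, Real.exp (∫ s in (0 : ℝ)..p, α s)) /
          Real.exp (∫ s in (0 : ℝ)..τ, α s)) := by
    filter_upwards [eventually_ge_atTop (0:ℝ)] with τ hτ
    congr 1
    · apply intervalIntegral.integral_congr
      intro p hp
      rw [Set.uIcc_of_le hτ] at hp
      simp only [hin p hp.1]
    · rw [hin τ hτ]
  exact (aux_ratio β hβc hβlim).congr' heq
end

section
/- Let λ be a real-analytic function on [a, ∞), not identically zero, and suppose the function Φ(τ) = ∫_a^τ λ(t) dt has a smallest zero τ₁ in (a, ∞). Let f be a positive nondecreasing function on [a, τ₁]. Then the function τ ↦ ∫_a^τ λ(t)·f(t) dt vanishes at some point of the interval (a, τ₁]. -/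
open MeasureTheory Set intervalIntegral



lemma key_fubini (a b M : ℝ) (hab : a ≤ b) (lam g : ℝ → ℝ)
    (hlam : Continuous lam) (hg : Antitone g) (hgb : 0 ≤ g b) (hM : g a ≤ M)
    (hΦ : ∀ c ∈ Set.Icc a b, 0 ≤ ∫ t in a..c, lam t) :
    0 ≤ ∫ t in a..b, lam t * g t := by
  set μ := volume.restrict (Icc a b) with hμ
  set ν := volume.restrict (Ioc 0 M) with hν
  set F : ℝ → ℝ → ℝ := fun t s => ({p : ℝ × ℝ | p.2 < g p.1}.indicator
      (fun p => lam p.1)) (t, s) with hF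
  have hmeasset : MeasurableSet {p : ℝ × ℝ | p.2 < g p.1} :=
    measurableSet_lt measurable_snd (hg.measurable.comp measurable_fst)
  have hFmeas : AEStronglyMeasurable (Function.uncurry F) (μ.prod ν) := by
    have : Function.uncurry F = ({p : ℝ × ℝ | p.2 < g p.1}.indicator (fun p => lam p.1)) := by
      ext ⟨t, s⟩; rfl
    rw [this]
    exact ((hlam.comp continuous_fst).stronglyMeasurable.indicator hmeasset).aestronglyMeasurable
  obtain ⟨C, hC⟩ : ∃ C, ∀ x ∈ Icc a b, ‖lam x‖ ≤ C :=
    isCompact_Icc.exists_bound_of_continuousOn hlam.continuousOn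
  have hbound : ∀ᵐ p ∂(μ.prod ν), ‖Function.uncurry F p‖ ≤ C := by
    have h1 : ∀ᵐ p ∂(μ.prod ν), p ∈ (Icc a b) ×ˢ (Ioc 0 M) := by
      rw [hμ, hν, Measure.prod_restrict]
      exact ae_restrict_mem (measurableSet_Icc.prod measurableSet_Ioc)
    refine h1.mono fun p hp => ?_
    rcases p with ⟨t, s⟩
    have ht : t ∈ Icc a b := hp.1
    have hval : Function.uncurry F (t, s) = if s < g t then lam t else 0 := by
      simp [Function.uncurry, F, Set.indicator_apply, Set.mem_setOf_eq]
    rw [hval]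
    split
    · exact hC t ht
    · simpa using (norm_nonneg (lam t)).trans (hC t ht)
  have hInt : Integrable (Function.uncurry F) (μ.prod ν) :=
    Integrable.mono' (integrable_const C) hFmeas hbound
  have hswap := integral_integral_swap hInt
  have hLHS : (∫ t, (∫ s, F t s ∂ν) ∂μ) = ∫ t in Icc a b, lam t * g t := by
    rw [hμ]
    refine setIntegral_congr_fun measurableSet_Icc fun t ht => ?_
    have hgt0 : 0 ≤ g t := hgb.trans (hg ht.2)
    have hgtM : g t ≤ M := (hg ht.1).trans hM
    have h1 : (fun s => F t s) = (Iio (g t)).indicator (fun _ => lam t) := by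
      ext s
      simp [F, Set.indicator_apply, Set.mem_setOf_eq, Set.mem_Iio]
    rw [h1, hν, MeasureTheory.integral_indicator measurableSet_Iio,
      Measure.restrict_restrict measurableSet_Iio, setIntegral_const]
    have h2 : Iio (g t) ∩ Ioc 0 M = Ioo 0 (g t) := by
      ext s
      constructor
      · rintro ⟨hs1, hs2, _⟩; exact ⟨hs2, hs1⟩
      · rintro ⟨hs1, hs2⟩; exact ⟨hs2, hs1, hs2.le.trans hgtM⟩
    rw [h2, measureReal_def, Real.volume_Ioo, sub_zero, ENNReal.toReal_ofReal hgt0, smul_eq_mul, mul_comm]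
  have hset : ∀ s : ℝ, MeasurableSet {t : ℝ | s < g t} := fun s =>
    measurableSet_lt measurable_const hg.measurable
  have hRHS : 0 ≤ ∫ s, (∫ t, F t s ∂μ) ∂ν := by
    rw [hν]
    refine setIntegral_nonneg measurableSet_Ioc fun s hs => ?_
    have h1 : (fun t => F t s) = ({t : ℝ | s < g t}).indicator lam := by
      ext t
      simp [F, Set.indicator_apply, Set.mem_setOf_eq]
    rw [h1, hμ, MeasureTheory.integral_indicator (hset s), Measure.restrict_restrict (hset s)]
    set T := {t : ℝ | s < g t} ∩ Icc a b with hT'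
    by_cases hT : T.Nonempty
    · set c := sSup T with hc
      have hbdd : BddAbove T := ⟨b, fun x hx => hx.2.2⟩
      obtain ⟨x₀, hx₀⟩ := id hT
      have hca : a ≤ c := hx₀.2.1.trans (le_csSup hbdd hx₀)
      have hcb : c ≤ b := csSup_le hT fun x hx => hx.2.2
      have hsub1 : Ioo a c ⊆ T := by
        rintro x ⟨hx1, hx2⟩
        obtain ⟨u, hu, hxu⟩ := exists_lt_of_lt_csSup hT hx2
        exact ⟨lt_of_lt_of_le hu.1 (hg hxu.le), hx1.le, hxu.le.trans hu.2.2⟩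
      have hsub2 : T ⊆ Icc a c := fun x hx => ⟨hx.2.1, le_csSup hbdd hx⟩
      have haeq : T =ᵐ[volume] Ioc a c := by
        refine MeasureTheory.ae_eq_set.mpr ⟨?_, ?_⟩
        · refine measure_mono_null (fun x hx => ?_) (Real.volume_singleton (a := a))
          have h3 := hsub2 hx.1
          have h4 := hx.2
          simp only [Set.mem_Ioc, not_and_or, not_lt, not_le] at h4
          rcases h4 with h4 | h4
          · exact le_antisymm h4 h3.1
          · exact absurd h3.2 (not_le.mpr h4)
        · refine measure_mono_null (fun x hx => ?_) (Real.volume_singleton (a := c))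
          rcases eq_or_lt_of_le hx.1.2 with h4 | h4
          · exact h4
          · exact absurd (hsub1 ⟨hx.1.1, h4⟩) hx.2
      rw [setIntegral_congr_set haeq, ← intervalIntegral.integral_of_le hca]
      exact hΦ c ⟨hca, hcb⟩
    · rw [Set.not_nonempty_iff_eq_empty] at hT
      simp [hT]
  rw [intervalIntegral.integral_of_le hab, ← integral_Icc_eq_integral_Ioc, ← hLHS, hswap]
  exact hRHS



lemma main_pos (a τ₁ : ℝ) (l f : ℝ → ℝ)
    (hτ₁ : a < τ₁)
    (hcont : ContinuousOn l (Set.Icc a τ₁))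
    (hne : ∃ ε > 0, ∀ t ∈ Set.Ioo a (a + ε), l t ≠ 0)
    (hpos : ∀ τ ∈ Set.Ioo a τ₁, 0 < ∫ t in a..τ, l t)
    (hΦzero : (∫ t in a..τ₁, l t) = 0)
    (hf_pos : ∀ t ∈ Set.Icc a τ₁, 0 < f t)
    (hf_mono : MonotoneOn f (Set.Icc a τ₁)) :
    ∃ τ ∈ Set.Ioc a τ₁, (∫ t in a..τ, l t * f t) = 0 := by
  obtain ⟨ε, hε, hlne⟩ := hne
  set δ := min ε (τ₁ - a) with hδdef
  have hδ : 0 < δ := lt_min hε (by linarith)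
  have hδτ : a + δ ≤ τ₁ := by
    have := min_le_right ε (τ₁ - a); simp only [hδdef]; linarith
  have hδε : a + δ ≤ a + ε := by
    have := min_le_left ε (τ₁ - a); linarith
  have hIoosub : Set.Ioo a (a + δ) ⊆ Set.Ioo a (a + ε) :=
    Set.Ioo_subset_Ioo le_rfl hδε
  have hIooIcc : Set.Ioo a (a + δ) ⊆ Set.Icc a τ₁ := fun x hx =>
    ⟨hx.1.le, hx.2.le.trans hδτ⟩
  -- l is positive on Ioo a (a+δ)
  have hlpos : ∀ t ∈ Set.Ioo a (a + δ), 0 < l t := by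
    by_contra h
    push_neg at h
    obtain ⟨t₀, ht₀, ht₀le⟩ := h
    have ht₀lt : l t₀ < 0 := lt_of_le_of_ne ht₀le (hlne t₀ (hIoosub ht₀))
    have hallneg : ∀ t ∈ Set.Ioo a (a + δ), l t < 0 := by
      intro t ht
      by_contra h'
      push_neg at h'
      have h'' : 0 < l t := lt_of_le_of_ne h' (Ne.symm (hlne t (hIoosub ht)))
      have hIooOC : Set.OrdConnected (Set.Ioo a (a + δ)) := Set.ordConnected_Ioo
      have husub : Set.uIcc t₀ t ⊆ Set.Ioo a (a + δ) := hIooOC.uIcc_subset ht₀ ht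
      have hcsub : ContinuousOn l (Set.uIcc t₀ t) :=
        hcont.mono (husub.trans hIooIcc)
      have h0mem : (0 : ℝ) ∈ Set.uIcc (l t₀) (l t) :=
        Set.mem_uIcc.mpr (Or.inl ⟨ht₀lt.le, h''.le⟩)
      obtain ⟨z, hz, hz0⟩ := intermediate_value_uIcc hcsub h0mem
      exact hlne z (hIoosub (husub hz)) hz0
    set m := a + δ / 2 with hm
    have ham : a < m := by simp only [hm]; linarith
    have hmδ : m < a + δ := by simp only [hm]; linarith
    have hintl : IntervalIntegrable l volume a m := by
      apply ContinuousOn.intervalIntegrable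
      apply hcont.mono
      rw [Set.uIcc_of_le ham.le]
      exact fun x hx => ⟨hx.1, hx.2.trans (hmδ.le.trans hδτ)⟩
    have hneg : 0 < ∫ t in a..m, -l t := by
      apply intervalIntegral_pos_of_pos_on hintl.neg _ ham
      intro x hx
      have : x ∈ Set.Ioo a (a + δ) := ⟨hx.1, hx.2.trans hmδ⟩
      simpa using hallneg x this
    rw [intervalIntegral.integral_neg] at hneg
    have := hpos m ⟨ham, lt_of_lt_of_le hmδ hδτ⟩
    linarith
  -- clamp
  set cl : ℝ → ℝ := fun t => max a (min t τ₁) with hcl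
  have hclmem : ∀ t, cl t ∈ Set.Icc a τ₁ := fun t =>
    ⟨le_max_left _ _, max_le (hτ₁.le) (min_le_right _ _)⟩
  have hcleq : ∀ t ∈ Set.Icc a τ₁, cl t = t := by
    intro t ht
    simp only [hcl]
    rw [min_eq_left ht.2, max_eq_right ht.1]
  have hclmono : Monotone cl := fun x y hxy =>
    max_le_max le_rfl (min_le_min hxy le_rfl)
  have hclcont : Continuous cl := continuous_const.max (continuous_id.min continuous_const)
  set L : ℝ → ℝ := fun t => l (cl t) with hL
  have hLcont : Continuous L := hcont.comp_continuous hclcont hclmem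
  have hLeq : ∀ t ∈ Set.Icc a τ₁, L t = l t := fun t ht => by
    simp only [hL]; rw [hcleq t ht]
  set g : ℝ → ℝ := fun t => f τ₁ - f (cl t) with hg
  have hganti : Antitone g := by
    intro x y hxy
    simp only [hg]
    have := hf_mono (hclmem x) (hclmem y) (hclmono hxy)
    linarith
  have hgb : 0 ≤ g τ₁ := by
    simp only [hg]
    rw [hcleq τ₁ ⟨hτ₁.le, le_rfl⟩]
    simp
  -- integrability of l * f on subintervals of [a, τ₁]
  have hintlf : ∀ c ∈ Set.Icc a τ₁, IntervalIntegrable (fun t => l t * f t) volume a c := by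
    intro c hc
    have huicc : Set.uIcc a c ⊆ Set.Icc a τ₁ := by
      rw [Set.uIcc_of_le hc.1]
      exact fun x hx => ⟨hx.1, hx.2.trans hc.2⟩
    have hfint : IntervalIntegrable f volume a c :=
      (hf_mono.mono huicc).intervalIntegrable
    exact hfint.continuousOn_mul (hcont.mono huicc)
  -- key : ∫ a..τ₁ l f ≤ 0
  have hG1 : (∫ t in a..τ₁, l t * f t) ≤ 0 := by
    have hkey := key_fubini a τ₁ (g a) hτ₁.le L g hLcont hganti hgb le_rfl ?_
    · have hcongr : (∫ t in a..τ₁, L t * g t) = ∫ t in a..τ₁, l t * (f τ₁ - f t) := by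
        apply intervalIntegral.integral_congr
        intro t ht
        rw [Set.uIcc_of_le hτ₁.le] at ht
        simp only [hL, hg]
        rw [hcleq t ht]
      have hsplit : (∫ t in a..τ₁, l t * (f τ₁ - f t))
          = (∫ t in a..τ₁, l t * f τ₁) - ∫ t in a..τ₁, l t * f t := by
        rw [← intervalIntegral.integral_sub]
        · congr 1; ext t; ring
        · exact (ContinuousOn.intervalIntegrable (by
            rw [Set.uIcc_of_le hτ₁.le]; exact hcont)).mul_const (f τ₁)
        · exact hintlf τ₁ ⟨hτ₁.le, le_rfl⟩
      have hfirst : (∫ t in a..τ₁, l t * f τ₁) = 0 := by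
        rw [intervalIntegral.integral_mul_const, hΦzero, zero_mul]
      rw [hcongr, hsplit, hfirst] at hkey
      linarith
    · intro c hc
      have hcongr : (∫ t in a..c, L t) = ∫ t in a..c, l t := by
        apply intervalIntegral.integral_congr
        intro t ht
        rw [Set.uIcc_of_le hc.1] at ht
        exact hLeq t ⟨ht.1, ht.2.trans hc.2⟩
      rw [hcongr]
      rcases eq_or_lt_of_le hc.1 with h | h
      · rw [← h]; simp
      · rcases eq_or_lt_of_le hc.2 with h' | h'
        · rw [h', hΦzero]
        · exact (hpos c ⟨h, h'⟩).le
  -- G positive at m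
  set m := a + δ / 2 with hm
  have ham : a < m := by simp only [hm]; linarith
  have hmδ : m < a + δ := by simp only [hm]; linarith
  have hmτ : m ≤ τ₁ := (hmδ.le.trans hδτ)
  have hG0 : 0 < ∫ t in a..m, l t * f t := by
    apply intervalIntegral_pos_of_pos_on (hintlf m ⟨ham.le, hmτ⟩) _ ham
    intro x hx
    have hx' : x ∈ Set.Ioo a (a + δ) := ⟨hx.1, hx.2.trans hmδ⟩
    exact mul_pos (hlpos x hx') (hf_pos x (hIooIcc hx'))
  -- continuity of the primitive
  have hGcont : ContinuousOn (fun τ => ∫ t in a..τ, l t * f t) (Set.Icc a τ₁) := by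
    have := intervalIntegral.continuousOn_primitive_interval
      (f := fun t => l t * f t) (μ := volume) (a := a) (b := τ₁) ?_
    · rwa [Set.uIcc_of_le hτ₁.le] at this
    · rw [Set.uIcc_of_le hτ₁.le, integrableOn_Icc_iff_integrableOn_Ioc]
      exact (hintlf τ₁ ⟨hτ₁.le, le_rfl⟩).1
  -- IVT
  have hGcont' : ContinuousOn (fun τ => ∫ t in a..τ, l t * f t) (Set.Icc m τ₁) :=
    hGcont.mono (fun x hx => ⟨ham.le.trans hx.1, hx.2⟩)
  have hiv := intermediate_value_Icc' hmτ hGcont'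
  have h0mem : (0 : ℝ) ∈ Set.Icc (∫ t in a..τ₁, l t * f t) (∫ t in a..m, l t * f t) :=
    ⟨hG1, hG0.le⟩
  obtain ⟨τ, hτmem, hτ0⟩ := hiv h0mem
  exact ⟨τ, ⟨ham.trans_le hτmem.1, hτmem.2⟩, hτ0⟩
/-- Lemma 3 (Kozlov): let `λ` be real-analytic on `[a, ∞)`, not identically zero, and let
`τ₁` be the first zero in `(a, ∞)` of `Φ(τ) = ∫_a^τ λ(t) dt`. If `f` is positive and
nondecreasing on `[a, τ₁]`, then `τ ↦ ∫_a^τ λ(t)·f(t) dt` vanishes at some point of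
`(a, τ₁]`. -/
theorem weighted_integral_vanishes
    (a τ₁ : ℝ) (l f : ℝ → ℝ)
    (hl : AnalyticOnNhd ℝ l (Set.Ici a))
    (hl_ne : ∃ t ∈ Set.Ici a, l t ≠ 0)
    (hτ₁ : a < τ₁)
    (hΦzero : (∫ t in a..τ₁, l t) = 0)
    (hΦfirst : ∀ τ ∈ Set.Ioo a τ₁, (∫ t in a..τ, l t) ≠ 0)
    (hf_pos : ∀ t ∈ Set.Icc a τ₁, 0 < f t)
    (hf_mono : MonotoneOn f (Set.Icc a τ₁)) :
    ∃ τ ∈ Set.Ioc a τ₁, (∫ t in a..τ, l t * f t) = 0 := by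
  have hIccIci : Set.Icc a τ₁ ⊆ Set.Ici a := fun x hx => hx.1
  have hcont : ContinuousOn l (Set.Icc a τ₁) := fun x hx =>
    ((hl x (hIccIci hx)).continuousAt).continuousWithinAt
  -- nonvanishing of l just to the right of a
  have hne : ∃ ε > 0, ∀ t ∈ Set.Ioo a (a + ε), l t ≠ 0 := by
    rcases (hl a Set.self_mem_Ici).eventually_eq_zero_or_eventually_ne_zero with h0 | h1
    · exfalso
      have := hl.eqOn_zero_of_preconnected_of_eventuallyEq_zero isPreconnected_Ici
        Set.self_mem_Ici h0
      obtain ⟨t, ht, htne⟩ := hl_ne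
      exact htne (this ht)
    · have h2 : ∀ᶠ z in nhdsWithin a (Set.Ioi a), l z ≠ 0 :=
        h1.filter_mono (nhdsWithin_mono a (fun x hx => ne_of_gt hx))
      rw [eventually_nhdsWithin_iff] at h2
      obtain ⟨u, hu, hsub⟩ := mem_nhdsGT_iff_exists_Ioo_subset.mp
        (eventually_nhdsWithin_iff.mpr h2)
      refine ⟨u - a, by simpa using hu, fun t ht => ?_⟩
      have : t ∈ Set.Ioo a u := by
        constructor
        · exact ht.1
        · have := ht.2; linarith
      exact hsub this
  -- sign dichotomy for Φ on (a, τ₁)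
  have hΦcont : ContinuousOn (fun τ => ∫ t in a..τ, l t) (Set.Icc a τ₁) := by
    have := intervalIntegral.continuousOn_primitive_interval
      (f := l) (μ := MeasureTheory.volume) (a := a) (b := τ₁) ?_
    · rwa [Set.uIcc_of_le hτ₁.le] at this
    · rw [Set.uIcc_of_le hτ₁.le]
      exact hcont.integrableOn_Icc
  have hdich : (∀ τ ∈ Set.Ioo a τ₁, 0 < ∫ t in a..τ, l t) ∨
      (∀ τ ∈ Set.Ioo a τ₁, (∫ t in a..τ, l t) < 0) := by
    by_contra h
    push_neg at h
    obtain ⟨⟨x, hx, hx0⟩, ⟨y, hy, hy0⟩⟩ := h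
    have hx0' : (∫ t in a..x, l t) < 0 := lt_of_le_of_ne hx0 (hΦfirst x hx)
    have hy0' : 0 < ∫ t in a..y, l t := lt_of_le_of_ne hy0 (Ne.symm (hΦfirst y hy))
    have hOC : Set.OrdConnected (Set.Ioo a τ₁) := Set.ordConnected_Ioo
    have husub : Set.uIcc x y ⊆ Set.Ioo a τ₁ := hOC.uIcc_subset hx hy
    have hΦc : ContinuousOn (fun τ => ∫ t in a..τ, l t) (Set.uIcc x y) :=
      hΦcont.mono (husub.trans (fun z hz => ⟨hz.1.le, hz.2.le⟩))
    have h0mem : (0 : ℝ) ∈ Set.uIcc (∫ t in a..x, l t) (∫ t in a..y, l t) :=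
      Set.mem_uIcc.mpr (Or.inl ⟨hx0'.le, hy0'.le⟩)
    obtain ⟨z, hz, hz0⟩ := intermediate_value_uIcc hΦc h0mem
    exact hΦfirst z (husub hz) hz0
  rcases hdich with hpos | hneg
  · exact main_pos a τ₁ l f hτ₁ hcont hne hpos hΦzero hf_pos hf_mono
  · have hres := main_pos a τ₁ (fun t => -l t) f hτ₁ hcont.neg
      (by obtain ⟨ε, hε, h⟩ := hne; exact ⟨ε, hε, fun t ht => neg_ne_zero.mpr (h t ht)⟩)
      (by intro τ hτ
          rw [intervalIntegral.integral_neg]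
          simpa using hneg τ hτ)
      (by rw [intervalIntegral.integral_neg, hΦzero, neg_zero])
      hf_pos hf_mono
    obtain ⟨τ, hτ, hτ0⟩ := hres
    refine ⟨τ, hτ, ?_⟩
    simp only [neg_mul] at hτ0
    rw [intervalIntegral.integral_neg, neg_eq_zero] at hτ0
    exact hτ0
end

section
/- Let v : ℝⁿ × ℝ → ℝⁿ be continuous and let D ⊂ ℝⁿ and h > 0 be such that ⟨x₁ − x₂, v(x₁, t) − v(x₂, t)⟩ ≤ −h·‖x₁ − x₂‖² for all x₁, x₂ ∈ D and all t. If x⁽¹⁾ and x⁽²⁾ are two solutions of ẋ = v(x, t) that remain in D on the interval [t₀, t], then ‖x⁽¹⁾(t) − x⁽²⁾(t)‖ ≤ e^{−h(t − t₀)}·‖x⁽¹⁾(t₀) − x⁽²⁾(t₀)‖; in particular the time-T flow map is a contraction with factor e^{−hT}. -/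
open scoped RealInnerProductSpace

/-- If the vector field `v` has the uniform compression property with constant `h > 0` on a
set `D` — i.e. `⟪x₁ - x₂, v(x₁,t) - v(x₂,t)⟫ ≤ -h‖x₁ - x₂‖²` on `D` — then any two
solutions remaining in `D` on `[t₀, t]` satisfy
`‖x⁽¹⁾(t) - x⁽²⁾(t)‖ ≤ e^{-h(t-t₀)}·‖x⁽¹⁾(t₀) - x⁽²⁾(t₀)‖`. -/
theorem compression_flow_contracts
    (n : ℕ)
    (v : EuclideanSpace ℝ (Fin n) → ℝ → EuclideanSpace ℝ (Fin n))
    (hv_cont : Continuous fun p : EuclideanSpace ℝ (Fin n) × ℝ => v p.1 p.2)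
    (D : Set (EuclideanSpace ℝ (Fin n))) (h : ℝ) (hh : 0 < h)
    (hcomp : ∀ x₁ ∈ D, ∀ x₂ ∈ D, ∀ t : ℝ,
      ⟪x₁ - x₂, v x₁ t - v x₂ t⟫ ≤ -h * ‖x₁ - x₂‖ ^ 2)
    (x₁ x₂ : ℝ → EuclideanSpace ℝ (Fin n)) (t₀ t : ℝ) (ht : t₀ ≤ t)
    (hx₁ : ∀ s ∈ Set.Icc t₀ t, HasDerivAt x₁ (v (x₁ s) s) s ∧ x₁ s ∈ D)
    (hx₂ : ∀ s ∈ Set.Icc t₀ t, HasDerivAt x₂ (v (x₂ s) s) s ∧ x₂ s ∈ D) :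
    ‖x₁ t - x₂ t‖ ≤ Real.exp (-h * (t - t₀)) * ‖x₁ t₀ - x₂ t₀‖ := by
  set d : ℝ → EuclideanSpace ℝ (Fin n) := fun s => x₁ s - x₂ s with hd
  -- the auxiliary function g(s) = exp(2h(s-t₀)) * ⟪d s, d s⟫
  set g : ℝ → ℝ := fun s => Real.exp (2 * h * (s - t₀)) * ⟪d s, d s⟫ with hgdef
  have hderiv : ∀ s ∈ Set.Icc t₀ t,
      HasDerivAt g (2 * h * Real.exp (2 * h * (s - t₀)) * ⟪d s, d s⟫ +
        Real.exp (2 * h * (s - t₀)) *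
          (⟪d s, v (x₁ s) s - v (x₂ s) s⟫ + ⟪v (x₁ s) s - v (x₂ s) s, d s⟫)) s := by
    intro s hs
    have hd' : HasDerivAt d (v (x₁ s) s - v (x₂ s) s) s :=
      (hx₁ s hs).1.sub (hx₂ s hs).1
    have hinner : HasDerivAt (fun u => ⟪d u, d u⟫)
        (⟪d s, v (x₁ s) s - v (x₂ s) s⟫ + ⟪v (x₁ s) s - v (x₂ s) s, d s⟫) s :=
      hd'.inner ℝ hd'
    have hlin : HasDerivAt (fun u => 2 * h * (u - t₀)) (2 * h) s := by
      simpa using ((hasDerivAt_id s).sub_const t₀).const_mul (2 * h)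
    have hexp := hlin.exp
    rw [hgdef]
    refine (hexp.mul hinner).congr_deriv ?_
    ring
  have hderiv_nonpos : ∀ s ∈ Set.Icc t₀ t,
      2 * h * Real.exp (2 * h * (s - t₀)) * ⟪d s, d s⟫ +
        Real.exp (2 * h * (s - t₀)) *
          (⟪d s, v (x₁ s) s - v (x₂ s) s⟫ + ⟪v (x₁ s) s - v (x₂ s) s, d s⟫) ≤ 0 := by
    intro s hs
    have hc := hcomp (x₁ s) (hx₁ s hs).2 (x₂ s) (hx₂ s hs).2 s
    have hsym : ⟪v (x₁ s) s - v (x₂ s) s, d s⟫ = ⟪d s, v (x₁ s) s - v (x₂ s) s⟫ :=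
      real_inner_comm _ _
    have hnorm : ⟪d s, d s⟫ = ‖d s‖ ^ 2 := real_inner_self_eq_norm_sq _
    rw [hsym, hnorm]
    have hexp_pos : (0:ℝ) < Real.exp (2 * h * (s - t₀)) := Real.exp_pos _
    nlinarith [hc, hexp_pos, sq_nonneg ‖d s‖]
  -- g is antitone on [t₀, t]
  have hanti : AntitoneOn g (Set.Icc t₀ t) := by
    apply antitoneOn_of_deriv_nonpos (convex_Icc t₀ t)
    · exact fun s hs => (hderiv s hs).continuousAt.continuousWithinAt
    · intro s hs
      rw [interior_Icc] at hs
      exact (hderiv s (Set.mem_Icc_of_Ioo hs)).differentiableAt.differentiableWithinAt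
    · intro s hs
      rw [interior_Icc] at hs
      rw [(hderiv s (Set.mem_Icc_of_Ioo hs)).deriv]
      exact hderiv_nonpos s (Set.mem_Icc_of_Ioo hs)
  have hgle : g t ≤ g t₀ :=
    hanti (Set.left_mem_Icc.2 ht) (Set.mem_Icc.2 ⟨ht, le_refl t⟩) ht
  have hnorm : ∀ s, ⟪d s, d s⟫ = ‖d s‖ ^ 2 := fun s => real_inner_self_eq_norm_sq _
  rw [hgdef] at hgle
  simp only [hnorm, sub_self, mul_zero, Real.exp_zero, one_mul] at hgle
  have hexp_pos : (0:ℝ) < Real.exp (2 * h * (t - t₀)) := Real.exp_pos _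
  have h1 := mul_le_mul_of_nonneg_left hgle (inv_nonneg.2 hexp_pos.le)
  rw [← mul_assoc, inv_mul_cancel₀ hexp_pos.ne', one_mul] at h1
  have key : ‖d t‖ ^ 2 ≤ (Real.exp (-h * (t - t₀)) * ‖d t₀‖) ^ 2 := by
    have e2 : (Real.exp (-h * (t - t₀)) * ‖d t₀‖) ^ 2
        = (Real.exp (2 * h * (t - t₀)))⁻¹ * ‖d t₀‖ ^ 2 := by
      rw [mul_pow, ← Real.exp_neg, sq, ← Real.exp_add]
      ring_nf
    rw [e2]
    exact h1
  have hfin := Real.sqrt_le_sqrt key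
  rwa [Real.sqrt_sq (norm_nonneg _), Real.sqrt_sq (by positivity)] at hfin
end

section
/- (Demidovich's criterion) Let D ⊂ ℝⁿ be convex and let v : ℝⁿ × ℝ → ℝⁿ be continuously differentiable in its first argument with Jacobian J(x, t) = (∂v_i/∂x_j). Suppose there is h > 0 such that the quadratic form of J is uniformly negative definite on D: ⟨ξ, J(x, t)·ξ⟩ ≤ −h·⟨ξ, ξ⟩ for all x ∈ D, all t, and all ξ ∈ ℝⁿ. Then v possesses the uniform compression property on D with constant h: ⟨x₁ − x₂, v(x₁, t) − v(x₂, t)⟩ ≤ −h·‖x₁ − x₂‖² for all x₁, x₂ ∈ D and all t. -/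
open scoped RealInnerProductSpace

/-- Demidovich's criterion: let `D ⊂ ℝⁿ` be convex and `v(·, t)` continuously
differentiable with Jacobian `J(x, t)` whose quadratic form is uniformly negative definite
on `D`: `⟪ξ, J(x,t)ξ⟫ ≤ -h⟪ξ, ξ⟫`. Then `v` has the uniform compression property on `D`
with constant `h`: `⟪x₁ - x₂, v(x₁,t) - v(x₂,t)⟫ ≤ -h‖x₁ - x₂‖²`. -/
theorem demidovich_criterion
    (n : ℕ) (D : Set (EuclideanSpace ℝ (Fin n))) (hD : Convex ℝ D)
    (v : EuclideanSpace ℝ (Fin n) → ℝ → EuclideanSpace ℝ (Fin n))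
    (hv : ∀ t : ℝ, ContDiff ℝ 1 fun x => v x t)
    (h : ℝ) (hh : 0 < h)
    (hJ : ∀ x ∈ D, ∀ (t : ℝ) (ξ : EuclideanSpace ℝ (Fin n)),
      ⟪ξ, fderiv ℝ (fun y => v y t) x ξ⟫ ≤ -h * ⟪ξ, ξ⟫) :
    ∀ x₁ ∈ D, ∀ x₂ ∈ D, ∀ t : ℝ,
      ⟪x₁ - x₂, v x₁ t - v x₂ t⟫ ≤ -h * ‖x₁ - x₂‖ ^ 2 := by
  intro x₁ hx₁ x₂ hx₂ t
  set u : EuclideanSpace ℝ (Fin n) := x₁ - x₂ with hu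
  set f : EuclideanSpace ℝ (Fin n) → EuclideanSpace ℝ (Fin n) := fun y => v y t with hf
  have hfd : Differentiable ℝ f := (hv t).differentiable one_ne_zero
  -- the curve
  set γ : ℝ → EuclideanSpace ℝ (Fin n) := fun s => x₂ + s • u with hγ
  have hγd : ∀ s : ℝ, HasDerivAt γ u s := by
    intro s
    simpa [hγ] using ((hasDerivAt_id s).smul_const u).const_add x₂
  set φ : ℝ → ℝ := fun s => ⟪u, f (γ s)⟫ with hφ
  have hφd : ∀ s : ℝ, HasDerivAt φ ⟪u, fderiv ℝ f (γ s) u⟫ s := by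
    intro s
    have h1 : HasDerivAt (fun s => f (γ s)) (fderiv ℝ f (γ s) u) s :=
      (hfd (γ s)).hasFDerivAt.comp_hasDerivAt s (hγd s)
    have h2 := (hasDerivAt_const s u).inner ℝ h1
    simpa using h2
  have hcont : ContinuousOn φ (Set.Icc 0 1) := fun s _ => (hφd s).continuousAt.continuousWithinAt
  have hdiff : ∀ s ∈ Set.Ioo (0:ℝ) 1, HasDerivAt φ ⟪u, fderiv ℝ f (γ s) u⟫ s :=
    fun s _ => hφd s
  obtain ⟨c, hc, hslope⟩ := exists_hasDerivAt_eq_slope φ (fun s => ⟪u, fderiv ℝ f (γ s) u⟫)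
    (by norm_num) hcont hdiff
  have hγc : γ c ∈ D := by
    have := hD hx₂ hx₁ (a := 1 - c) (b := c) (by linarith [hc.1, hc.2]) (le_of_lt hc.1)
      (by ring)
    have heq : γ c = (1 - c) • x₂ + c • x₁ := by
      simp only [hγ, hu, smul_sub]
      module
    rw [heq]
    exact this
  have hbound : ⟪u, fderiv ℝ f (γ c) u⟫ ≤ -h * ⟪u, u⟫ := hJ (γ c) hγc t u
  have hγ1 : γ 1 = x₁ := by
    simp only [hγ, hu, one_smul]
    abel
  have hφ1 : φ 1 = ⟪u, v x₁ t⟫ := by rw [hφ]; simp only [hγ1]; rfl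
  have hφ0 : φ 0 = ⟪u, v x₂ t⟫ := by simp [hφ, hγ, hf]
  have hslope' : φ 1 - φ 0 = ⟪u, fderiv ℝ f (γ c) u⟫ := by
    rw [hslope]; field_simp [slope]; ring
  rw [hφ1, hφ0, ← inner_sub_right] at hslope'
  rw [hslope']
  calc ⟪u, fderiv ℝ f (γ c) u⟫ ≤ -h * ⟪u, u⟫ := hbound
    _ = -h * ‖u‖ ^ 2 := by rw [real_inner_self_eq_norm_sq]
end
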